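/- arXiv:2211.01129 — 9 statements merged into one kernel-verified Lean document; each statement's English description precedes it below -/
import Mathlib

section
/- Assume f satisfies (f0)–(f4). Then for every real t ≠ 0 one has f(t)·t > p_*·F(t) > 0. (This is Lemma 2.3 of the paper.) -/
/-!
Let `q = p_*`, `F̃(s) = f(s) s - 2 F(s)` and `φ(s) = F̃(s) / s^q` for `s > 0`. Since
`f = o(s^(q-1))` at `0⁺`, the mean value theorem gives `F = o(s^q)`, so `φ → 0` at `0⁺` and the
monotonicity of `φ` forces `φ > 0`. As `(F/s²)' = F̃/s³ = φ(s) s^(q-3) > 0` and `F/s² → 0`, we get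
`F > 0`. For fixed `t > 0`, on `(0, t)` the derivative of `F/s²` is strictly smaller than that of
`φ(t) s^(q-2)/(q-2)`, and both tend to `0` at `0⁺`; evaluating at `t` gives `(q - 2) F(t) < F̃(t)`,
i.e. `f(t) t > q F(t)`. Negative `t` reduce to positive ones through `s ↦ -f(-s)`, whose
primitive is `F(-s)`.
-/

open Filter Set Topology Asymptotics Real

theorem lt_of_strictMonoOn_Ioc_of_tendsto_nhdsGT {α β : Type*} [LinearOrder α]
    [TopologicalSpace α] [OrderTopology α] [DenselyOrdered α] [LinearOrder β] [TopologicalSpace β]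
    [ClosedIicTopology β] {h : α → β} {a b : α} {l : β} (hab : a < b)
    (hh : StrictMonoOn h (Ioc a b)) (hlim : Tendsto h (𝓝[>] a) (𝓝 l)) : l < h b := by
  obtain ⟨m, ham, hmb⟩ := exists_between hab
  have : (𝓝[>] a).NeBot := nhdsGT_neBot_of_exists_gt ⟨b, hab⟩
  have hlm : l ≤ h m := le_of_tendsto hlim <| by
    filter_upwards [Ioo_mem_nhdsGT ham] with x hx
    exact (hh ⟨hx.1, hx.2.le.trans hmb.le⟩ ⟨ham, hmb.le⟩ hx.2).le
  exact hlm.trans_lt (hh ⟨ham, hmb.le⟩ ⟨hab, le_rfl⟩ hmb)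

theorem lt_of_hasDerivAt_pos_of_tendsto_nhdsGT {g g' : ℝ → ℝ} {a b l : ℝ} (hab : a < b)
    (hg : ∀ x ∈ Ioc a b, HasDerivAt g (g' x) x) (hg' : ∀ x ∈ Ioo a b, 0 < g' x)
    (hlim : Tendsto g (𝓝[>] a) (𝓝 l)) : l < g b := by
  refine lt_of_strictMonoOn_Ioc_of_tendsto_nhdsGT hab ?_ hlim
  refine strictMonoOn_of_hasDerivWithinAt_pos (f' := g') (convex_Ioc a b)
    (fun x hx => (hg x hx).continuousAt.continuousWithinAt) (fun x hx => ?_) ?_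
  · rw [interior_Ioc] at hx ⊢
    exact (hg x (Ioo_subset_Ioc_self hx)).hasDerivWithinAt
  · simpa only [interior_Ioc] using hg'

theorem div_rpow_mul_rpow_sub_natCast {x : ℝ} (hx : 0 < x) (a q : ℝ) (n : ℕ) :
    a / x ^ q * x ^ (q - n) = a / x ^ n := by
  have := rpow_pos_of_pos hx q
  rw [rpow_sub hx, rpow_natCast]
  field_simp

theorem hasDerivAt_div_sq {f F : ℝ → ℝ} {x : ℝ} (hF : HasDerivAt F (f x) x) (hx : x ≠ 0) :
    HasDerivAt (fun s => F s / s ^ 2) ((f x * x - 2 * F x) / x ^ 3) x := by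
  refine (hF.div (hasDerivAt_pow 2 x) (pow_ne_zero 2 hx)).congr_deriv ?_
  field_simp
  ring

section Primitive

variable {f F : ℝ → ℝ} {q : ℝ}

theorem isLittleO_rpow_of_hasDerivAt (hq : 1 ≤ q) (hF : ∀ x, HasDerivAt F (f x) x)
    (hF0 : F 0 = 0) (hf : f =o[𝓝[>] 0] (· ^ (q - 1))) : F =o[𝓝[>] 0] (· ^ q) := by
  refine IsLittleO.of_bound fun c hc => ?_
  obtain ⟨δ, hδ, hbound⟩ := mem_nhdsGT_iff_exists_Ioo_subset.1 (hf.bound hc)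
  filter_upwards [Ioo_mem_nhdsGT hδ] with s hs
  obtain ⟨ξ, hξ, hslope⟩ := exists_hasDerivAt_eq_slope F f hs.1
    (fun x _ => (hF x).continuousAt.continuousWithinAt) (fun x _ => hF x)
  have hFs : F s = f ξ * s := by
    rw [hslope, hF0, sub_zero, sub_zero, div_mul_cancel₀ _ hs.1.ne']
  have hfξ : |f ξ| ≤ c * ξ ^ (q - 1) := by
    simpa [abs_of_pos (rpow_pos_of_pos hξ.1 _)] using hbound ⟨hξ.1, hξ.2.trans hs.2⟩
  rw [norm_eq_abs, norm_eq_abs, abs_of_pos (rpow_pos_of_pos hs.1 _), hFs, abs_mul,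
    abs_of_pos hs.1]
  have hs0 : 0 ≤ s := hs.1.le
  calc |f ξ| * s ≤ c * ξ ^ (q - 1) * s := by gcongr
    _ ≤ c * s ^ (q - 1) * s := by
      have hξs : ξ ^ (q - 1) ≤ s ^ (q - 1) := rpow_le_rpow hξ.1.le hξ.2.le (sub_nonneg.2 hq)
      gcongr
    _ = c * s ^ q := by rw [mul_assoc, ← rpow_add_one hs.1.ne', sub_add_cancel]

theorem tendsto_mul_sub_two_mul_div_rpow_nhdsGT_zero (hq : 1 ≤ q)
    (hF : ∀ x, HasDerivAt F (f x) x) (hF0 : F 0 = 0) (hf : f =o[𝓝[>] 0] (· ^ (q - 1))) :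
    Tendsto (fun s => (f s * s - 2 * F s) / s ^ q) (𝓝[>] 0) (𝓝 0) := by
  have hfs : (fun s => f s * s) =o[𝓝[>] 0] (· ^ q) := by
    refine (hf.mul_isBigO (isBigO_refl id _)).congr' EventuallyEq.rfl ?_
    filter_upwards [self_mem_nhdsWithin] with s (hs : 0 < s)
    rw [id, ← rpow_add_one hs.ne', sub_add_cancel]
  refine (isLittleO_iff_tendsto' ?_).1
    (hfs.sub ((isLittleO_rpow_of_hasDerivAt hq hF hF0 hf).const_mul_left 2))
  filter_upwards [self_mem_nhdsWithin] with s (hs : 0 < s) hsq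
  exact absurd hsq (rpow_pos_of_pos hs q).ne'

theorem tendsto_div_sq_nhdsGT_zero (hq : 2 ≤ q) (hF : ∀ x, HasDerivAt F (f x) x) (hF0 : F 0 = 0)
    (hf : f =o[𝓝[>] 0] (· ^ (q - 1))) : Tendsto (fun s => F s / s ^ 2) (𝓝[>] 0) (𝓝 0) := by
  have hq2 : (fun s : ℝ => s ^ q) =O[𝓝[>] 0] (fun s => s ^ 2) := by
    refine IsBigO.of_bound 1 ?_
    filter_upwards [Ioo_mem_nhdsGT one_pos] with s hs
    rw [one_mul, norm_of_nonneg (rpow_nonneg hs.1.le _), norm_of_nonneg (sq_nonneg s),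
      ← rpow_two]
    exact rpow_le_rpow_of_exponent_ge hs.1 hs.2.le hq
  refine (isLittleO_iff_tendsto' ?_).1
    ((isLittleO_rpow_of_hasDerivAt (by linarith) hF hF0 hf).trans_isBigO hq2)
  filter_upwards [self_mem_nhdsWithin] with s (hs : 0 < s) hsq
  exact absurd hsq (pow_pos hs 2).ne'

theorem mul_sub_two_mul_pos (hq : 1 ≤ q) (hF : ∀ x, HasDerivAt F (f x) x) (hF0 : F 0 = 0)
    (hf : f =o[𝓝[>] 0] (· ^ (q - 1)))
    (hmono : StrictMonoOn (fun s => (f s * s - 2 * F s) / s ^ q) (Ioi 0)) {t : ℝ} (ht : 0 < t) :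
    0 < f t * t - 2 * F t := by
  have := lt_of_strictMonoOn_Ioc_of_tendsto_nhdsGT ht (hmono.mono Ioc_subset_Ioi_self)
    (tendsto_mul_sub_two_mul_div_rpow_nhdsGT_zero hq hF hF0 hf)
  exact (div_pos_iff_of_pos_right (rpow_pos_of_pos ht q)).1 this

theorem primitive_pos (hq : 2 ≤ q) (hF : ∀ x, HasDerivAt F (f x) x) (hF0 : F 0 = 0)
    (hf : f =o[𝓝[>] 0] (· ^ (q - 1)))
    (hmono : StrictMonoOn (fun s => (f s * s - 2 * F s) / s ^ q) (Ioi 0)) {t : ℝ} (ht : 0 < t) :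
    0 < F t := by
  have := lt_of_hasDerivAt_pos_of_tendsto_nhdsGT ht
    (fun x hx => hasDerivAt_div_sq (hF x) hx.1.ne')
    (fun x hx => div_pos (mul_sub_two_mul_pos (by linarith) hF hF0 hf hmono hx.1)
      (pow_pos hx.1 3))
    (tendsto_div_sq_nhdsGT_zero hq hF hF0 hf)
  exact (div_pos_iff_of_pos_right (pow_pos ht 2)).1 this

theorem sub_two_mul_primitive_lt (hq : 2 < q) (hF : ∀ x, HasDerivAt F (f x) x) (hF0 : F 0 = 0)
    (hf : f =o[𝓝[>] 0] (· ^ (q - 1)))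
    (hmono : StrictMonoOn (fun s => (f s * s - 2 * F s) / s ^ q) (Ioi 0)) {t : ℝ} (ht : 0 < t) :
    (q - 2) * F t < f t * t - 2 * F t := by
  have hq2 : 0 < q - 2 := sub_pos.2 hq
  set c := (f t * t - 2 * F t) / t ^ q
  have hcomp : 0 < c * t ^ (q - 2) / (q - 2) - F t / t ^ 2 := by
    refine lt_of_hasDerivAt_pos_of_tendsto_nhdsGT
      (g := fun s => c * s ^ (q - 2) / (q - 2) - F s / s ^ 2)
      (g' := fun s => c * s ^ (q - 3) - (f s * s - 2 * F s) / s ^ 3) ht (fun x hx => ?_)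
      (fun x hx => ?_) ?_
    · refine ((((hasDerivAt_rpow_const (.inl hx.1.ne')).const_mul c).div_const (q - 2)).sub
        (hasDerivAt_div_sq (hF x) hx.1.ne')).congr_deriv ?_
      rw [show q - 2 - 1 = q - 3 by ring]
      field_simp
    · have h3 := div_rpow_mul_rpow_sub_natCast hx.1 (f x * x - 2 * F x) q 3
      push_cast at h3
      rw [sub_pos, ← h3]
      exact mul_lt_mul_of_pos_right (hmono hx.1 ht hx.2) (rpow_pos_of_pos hx.1 _)
    · have hrpow := (continuousAt_rpow_const 0 (q - 2) (.inr hq2.le)).tendsto.mono_left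
        (nhdsWithin_le_nhds (s := Ioi 0))
      simpa [zero_rpow hq2.ne'] using
        ((hrpow.const_mul c).div_const (q - 2)).sub (tendsto_div_sq_nhdsGT_zero hq.le hF hF0 hf)
  have h2 := div_rpow_mul_rpow_sub_natCast ht (f t * t - 2 * F t) q 2
  push_cast at h2
  rw [h2] at hcomp
  have := mul_pos hcomp (mul_pos hq2 (pow_pos ht 2))
  field_simp at this
  linarith

theorem mul_primitive_lt_and_primitive_pos (hq : 2 < q) (hF : ∀ x, HasDerivAt F (f x) x)
    (hF0 : F 0 = 0) (hf : f =o[𝓝[>] 0] (· ^ (q - 1)))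
    (hmono : StrictMonoOn (fun s => (f s * s - 2 * F s) / s ^ q) (Ioi 0)) {t : ℝ} (ht : 0 < t) :
    q * F t < f t * t ∧ 0 < F t :=
  ⟨by linarith [sub_two_mul_primitive_lt hq hF hF0 hf hmono ht],
    primitive_pos hq.le hF hF0 hf hmono ht⟩

theorem mul_primitive_lt_and_primitive_pos_of_ne_zero (hq : 2 < q)
    (hF : ∀ x, HasDerivAt F (f x) x) (hF0 : F 0 = 0)
    (hf : f =o[𝓝[≠] 0] (fun s => |s| ^ (q - 1)))
    (hanti : StrictAntiOn (fun s => (f s * s - 2 * F s) / |s| ^ q) (Iio 0))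
    (hmono : StrictMonoOn (fun s => (f s * s - 2 * F s) / |s| ^ q) (Ioi 0)) {t : ℝ}
    (ht : t ≠ 0) : q * F t < f t * t ∧ 0 < F t := by
  rcases ht.lt_or_gt with hneg | hpos
  · have hF' (x : ℝ) : HasDerivAt (fun s => F (-s)) (-f (-x)) x :=
      ((hF (-x)).comp x (hasDerivAt_neg x)).congr_deriv (mul_neg_one _)
    have hf' : (fun s => -f (-s)) =o[𝓝[>] 0] (· ^ (q - 1)) := by
      have hneg : Tendsto Neg.neg (𝓝[>] (0 : ℝ)) (𝓝[≠] 0) := by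
        simpa using (tendsto_neg_nhdsGT (a := (0 : ℝ))).mono_right (nhdsLT_le_nhdsNE _)
      refine (hf.comp_tendsto hneg).neg_left.congr' EventuallyEq.rfl ?_
      filter_upwards [self_mem_nhdsWithin] with s (hs : 0 < s)
      simp [abs_of_pos hs]
    have hmono' : StrictMonoOn (fun s => (-f (-s) * s - 2 * F (-s)) / s ^ q) (Ioi 0) := by
      intro a (ha : 0 < a) b (hb : 0 < b) hab
      have := hanti (neg_lt_zero.2 hb) (neg_lt_zero.2 ha) (neg_lt_neg hab)
      simpa [abs_of_pos ha, abs_of_pos hb] using this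
    have := mul_primitive_lt_and_primitive_pos hq hF' (by simpa using hF0) hf' hmono'
      (neg_pos.2 hneg)
    simp only [neg_neg] at this
    exact ⟨by linarith [this.1], this.2⟩
  · refine mul_primitive_lt_and_primitive_pos hq hF hF0 ?_ (hmono.congr fun s hs => ?_) hpos
    · refine (hf.mono (nhdsGT_le_nhdsNE 0)).congr' EventuallyEq.rfl ?_
      filter_upwards [self_mem_nhdsWithin] with s (hs : 0 < s)
      rw [abs_of_pos hs]
    · simp only [abs_of_pos (show 0 < s from hs)]

end Primitive

theorem stmt_0_general (N : ℕ) (p : ℝ) (hp2 : 2 ≤ p) (hpN : p < (N : ℝ))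
    (f F Ft : ℝ → ℝ) (hf0 : Continuous f)
    (hF : ∀ t : ℝ, F t = ∫ s in (0:ℝ)..t, f s)
    (hFt : ∀ t : ℝ, Ft t = f t * t - 2 * F t)
    (hf1 : Tendsto (fun t : ℝ => f t / |t| ^ (p + 2 * p / (N : ℝ) - 1)) (nhdsWithin 0 {0}ᶜ) (nhds 0))
    (hf4a : StrictAntiOn (fun t : ℝ => Ft t / |t| ^ (p + 2 * p / (N : ℝ))) (Iio 0))
    (hf4b : StrictMonoOn (fun t : ℝ => Ft t / |t| ^ (p + 2 * p / (N : ℝ))) (Ioi 0)) :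
    ∀ t : ℝ, t ≠ 0 → f t * t > (p + 2 * p / (N : ℝ)) * F t ∧ (p + 2 * p / (N : ℝ)) * F t > 0 := by
  set q := p + 2 * p / (N : ℝ)
  have hq : 2 < q := by
    have : 0 < 2 * p / (N : ℝ) := by apply div_pos <;> linarith
    linarith
  obtain rfl : Ft = fun t => f t * t - 2 * F t := funext hFt
  obtain rfl : F = fun t => ∫ s in (0:ℝ)..t, f s := funext hF
  have hf : f =o[𝓝[≠] 0] (fun s => |s| ^ (q - 1)) := by
    refine isLittleO_of_tendsto' ?_ hf1
    filter_upwards [self_mem_nhdsWithin] with s (hs : s ≠ 0) hsq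
    exact absurd hsq (rpow_pos_of_pos (abs_pos.2 hs) _).ne'
  intro t ht
  obtain ⟨hlt, hpos⟩ := mul_primitive_lt_and_primitive_pos_of_ne_zero hq
    (fun x => (hf0.integral_hasStrictDerivAt 0 x).hasDerivAt) (by simp) hf hf4a hf4b ht
  exact ⟨hlt, mul_pos (by linarith) hpos⟩

theorem stmt_0 (N : ℕ) (hN : 3 ≤ N) (p : ℝ) (hp2 : 2 ≤ p) (hpN : p < (N : ℝ))
    (f F Ft : ℝ → ℝ) (hf0 : Continuous f)
    (hF : ∀ t : ℝ, F t = ∫ s in (0:ℝ)..t, f s)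
    (hFt : ∀ t : ℝ, Ft t = f t * t - 2 * F t)
    (hf1 : Tendsto (fun t : ℝ => f t / |t| ^ (p + 2 * p / (N : ℝ) - 1)) (nhdsWithin 0 {0}ᶜ) (nhds 0))
    (hf2 : Tendsto (fun t : ℝ => f t / |t| ^ ((N : ℝ) * p / ((N : ℝ) - p) - 1)) (cocompact ℝ) (nhds 0))
    (hf3 : Tendsto (fun t : ℝ => F t / |t| ^ (p + 2 * p / (N : ℝ))) (cocompact ℝ) atTop)
    (hf4a : StrictAntiOn (fun t : ℝ => Ft t / |t| ^ (p + 2 * p / (N : ℝ))) (Iio 0))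
    (hf4b : StrictMonoOn (fun t : ℝ => Ft t / |t| ^ (p + 2 * p / (N : ℝ))) (Ioi 0)) :
    ∀ t : ℝ, t ≠ 0 → f t * t > (p + 2 * p / (N : ℝ)) * F t ∧ (p + 2 * p / (N : ℝ)) * F t > 0 :=
  stmt_0_general N p hp2 hpN f F Ft hf0 hF hFt hf1 hf4a hf4b
end

section
/- Assume f satisfies (f0)–(f4). Then there exist a sequence (θ⁺_n) of strictly positive reals and a sequence (θ⁻_n) of strictly negative reals such that |θ⁺_n| → 0 and |θ⁻_n| → 0 as n → ∞, and f(θ⁺_n)·θ⁺_n > p_*·F(θ⁺_n) and f(θ⁻_n)·θ⁻_n > p_*·F(θ⁻_n) for every n. (Claim 2 in the proof of Lemma 2.3.) -/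
/-!
Write `c = p_*`. Since `f(t) = o(|t|^(c-1))` at `0`, the mean value theorem gives `F(t) = o(|t|^c)`,
so `F̃(t)/|t|^c → 0`; being strictly monotone away from `0` by (f4), this quotient is positive, i.e.
`f(t)t > 2F(t)` for `t ≠ 0`. If `f(t)t ≤ cF(t)` held on a whole interval `(0, δ)`, then `F > 0` there
(as `c > 2`) and `(F(t)/t^c)' = t^(c-1)(f(t)t - cF(t))/t^(2c) ≤ 0`, so `F(t)/t^c` would stay above a
positive constant as `t → 0⁺`, contradicting `F(t) = o(t^c)`. Hence `f(t)t > cF(t)` at points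
arbitrarily close to `0⁺`; the side `0⁻` follows by applying this to `t ↦ -f(-t)`, `t ↦ F(-t)`.
-/

open Filter Set MeasureTheory

open Topology

theorem StrictMonoOn.lt_of_tendsto_nhdsGT {α β : Type*} [TopologicalSpace α] [LinearOrder α]
    [OrderTopology α] [DenselyOrdered α] [NoMaxOrder α] [TopologicalSpace β] [Preorder β]
    [OrderClosedTopology β] {g : α → β} {a : α} {b : β} (hg : StrictMonoOn g (Ioi a))
    (hlim : Tendsto g (𝓝[>] a) (𝓝 b)) {t : α} (ht : a < t) : b < g t := by
  obtain ⟨s, has, hst⟩ := exists_between ht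
  have hbs : b ≤ g s := le_of_tendsto hlim <| by
    filter_upwards [Ioo_mem_nhdsGT has] with r hr using (hg hr.1 has hr.2).le
  exact hbs.trans_lt (hg has ht hst)

theorem exists_seq_forall_of_frequently_nhdsWithin {X : Type*} [TopologicalSpace X]
    [FirstCountableTopology X] {s : Set X} {a : X} {P : X → Prop} (h : ∃ᶠ x in 𝓝[s] a, P x) :
    ∃ u : ℕ → X, (∀ n, u n ∈ s) ∧ Tendsto u atTop (𝓝 a) ∧ ∀ n, P (u n) := by
  rw [frequently_nhdsWithin_iff] at h
  obtain ⟨u, hu, hP⟩ := exists_seq_forall_of_frequently h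
  exact ⟨u, fun n => (hP n).2, hu, fun n => (hP n).1⟩

section Antiderivative

variable {c : ℝ} {f F : ℝ → ℝ}

theorem tendsto_div_rpow_nhdsGT_zero_of_hasDerivAt (hc : 1 ≤ c)
    (hF : ∀ t > 0, HasDerivAt F (f t) t) (hFc : ContinuousOn F (Ici 0)) (hF0 : F 0 = 0)
    (hf : Tendsto (fun t => f t / t ^ (c - 1)) (𝓝[>] 0) (𝓝 0)) :
    Tendsto (fun t => F t / t ^ c) (𝓝[>] 0) (𝓝 0) := by
  have hfo : f =o[𝓝[>] 0] fun t => t ^ (c - 1) := by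
    refine (Asymptotics.isLittleO_iff_tendsto' ?_).2 hf
    filter_upwards [self_mem_nhdsWithin] with t (ht : 0 < t) h
    exact absurd h (Real.rpow_pos_of_pos ht _).ne'
  refine (Asymptotics.isLittleO_iff.2 fun ε hε => ?_).tendsto_div_nhds_zero
  obtain ⟨δ, hδ, hsub⟩ := mem_nhdsGT_iff_exists_Ioo_subset.1 (hfo.def hε)
  filter_upwards [Ioo_mem_nhdsGT hδ] with t ht
  obtain ⟨ξ, hξ, hslope⟩ := exists_hasDerivAt_eq_slope F f ht.1
    (hFc.mono Icc_subset_Ici_self) fun x hx => hF x hx.1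
  rw [hF0, sub_zero, sub_zero, eq_div_iff ht.1.ne'] at hslope
  have hfξ : |f ξ| ≤ ε * ξ ^ (c - 1) := by
    simpa [abs_of_pos (Real.rpow_pos_of_pos hξ.1 _)] using hsub ⟨hξ.1, hξ.2.trans ht.2⟩
  have hξt : ξ ^ (c - 1) ≤ t ^ (c - 1) := Real.rpow_le_rpow hξ.1.le hξ.2.le (by linarith)
  calc ‖F t‖ = |f ξ| * t := by rw [← hslope, Real.norm_eq_abs, abs_mul, abs_of_pos ht.1]
    _ ≤ ε * t ^ (c - 1) * t :=
      mul_le_mul_of_nonneg_right (hfξ.trans (mul_le_mul_of_nonneg_left hξt hε.le)) ht.1.le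
    _ = ε * ‖t ^ c‖ := by
      rw [Real.norm_eq_abs, abs_of_pos (Real.rpow_pos_of_pos ht.1 _), mul_assoc,
        ← Real.rpow_add_one ht.1.ne', sub_add_cancel]

theorem antitoneOn_div_rpow_of_mul_le {a b : ℝ} (ha : 0 ≤ a)
    (hF : ∀ t ∈ Ioo a b, HasDerivAt F (f t) t) (hle : ∀ t ∈ Ioo a b, f t * t ≤ c * F t) :
    AntitoneOn (fun t => F t / t ^ c) (Ioo a b) := by
  have hderiv : ∀ t ∈ Ioo a b, HasDerivAt (fun t => F t / t ^ c)
      ((f t * t ^ c - F t * (c * t ^ (c - 1))) / (t ^ c) ^ 2) t := fun t ht =>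
    have ht0 : 0 < t := ha.trans_lt ht.1
    (hF t ht).div (Real.hasDerivAt_rpow_const (Or.inl ht0.ne')) (Real.rpow_pos_of_pos ht0 _).ne'
  refine antitoneOn_of_hasDerivWithinAt_nonpos (convex_Ioo a b)
    (f' := fun t => (f t * t ^ c - F t * (c * t ^ (c - 1))) / (t ^ c) ^ 2)
    (fun t ht => (hderiv t ht).continuousAt.continuousWithinAt) ?_ ?_ <;>
    rw [interior_Ioo]
  · exact fun t ht => (hderiv t ht).hasDerivWithinAt
  · intro t ht
    have ht0 : 0 < t := ha.trans_lt ht.1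
    have hnum : f t * t ^ c - F t * (c * t ^ (c - 1)) = t ^ (c - 1) * (f t * t - c * F t) := by
      rw [show t ^ c = t ^ (c - 1) * t by rw [← Real.rpow_add_one ht0.ne', sub_add_cancel]]
      ring
    rw [hnum]
    exact div_nonpos_of_nonpos_of_nonneg
      (mul_nonpos_of_nonneg_of_nonpos (Real.rpow_pos_of_pos ht0 _).le (by linarith [hle t ht]))
      (sq_nonneg _)

theorem frequently_nhdsGT_zero_mul_lt_mul_self_of_tendsto (hc : 2 < c)
    (hF : ∀ t > 0, HasDerivAt F (f t) t) (hlim : Tendsto (fun t => F t / t ^ c) (𝓝[>] 0) (𝓝 0))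
    (hpos : ∀ t > 0, 2 * F t < f t * t) : ∃ᶠ t in 𝓝[>] 0, c * F t < f t * t := by
  by_contra h
  simp only [not_frequently, not_lt] at h
  obtain ⟨δ, hδ, hsub⟩ := mem_nhdsGT_iff_exists_Ioo_subset.1 h
  have hanti := antitoneOn_div_rpow_of_mul_le le_rfl (fun t ht => hF t ht.1) fun t ht => hsub ht
  have ht₀ : δ / 2 ∈ Ioo 0 δ := ⟨by linarith [mem_Ioi.1 hδ], by linarith [mem_Ioi.1 hδ]⟩
  have hle₀ : f (δ / 2) * (δ / 2) ≤ c * F (δ / 2) := hsub ht₀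
  have hFt₀ : 0 < F (δ / 2) := by nlinarith [hpos _ ht₀.1]
  have hle : F (δ / 2) / (δ / 2) ^ c ≤ 0 := ge_of_tendsto hlim <| by
    filter_upwards [Ioo_mem_nhdsGT ht₀.1] with t ht
    exact hanti ⟨ht.1, ht.2.trans ht₀.2⟩ ht₀ ht.2.le
  exact hle.not_gt (div_pos hFt₀ (Real.rpow_pos_of_pos ht₀.1 _))

theorem frequently_nhdsGT_zero_mul_lt_mul_self (hc : 2 < c) (hF : ∀ t, HasDerivAt F (f t) t)
    (hF0 : F 0 = 0) (hf : Tendsto (fun t => f t / |t| ^ (c - 1)) (𝓝[>] 0) (𝓝 0))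
    (hmono : StrictMonoOn (fun t => (f t * t - 2 * F t) / |t| ^ c) (Ioi 0)) :
    ∃ᶠ t in 𝓝[>] 0, c * F t < f t * t := by
  have hf' : Tendsto (fun t => f t / t ^ (c - 1)) (𝓝[>] 0) (𝓝 0) := hf.congr' <| by
    filter_upwards [self_mem_nhdsWithin] with t (ht : 0 < t)
    rw [abs_of_pos ht]
  have hlim := tendsto_div_rpow_nhdsGT_zero_of_hasDerivAt (by linarith) (fun t _ => hF t)
    (fun t _ => (hF t).continuousAt.continuousWithinAt) hF0 hf'
  have hGlim : Tendsto (fun t => (f t * t - 2 * F t) / |t| ^ c) (𝓝[>] 0) (𝓝 0) := by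
    have h := hf'.sub (hlim.const_mul 2)
    rw [mul_zero, sub_zero] at h
    refine h.congr' ?_
    filter_upwards [self_mem_nhdsWithin] with t (ht : 0 < t)
    have htc : t ^ c ≠ 0 := (Real.rpow_pos_of_pos ht _).ne'
    rw [abs_of_pos ht, Real.rpow_sub_one ht.ne']
    field_simp
  have hpos : ∀ t > 0, 2 * F t < f t * t := fun t ht => by
    have h := hmono.lt_of_tendsto_nhdsGT hGlim ht
    rw [abs_of_pos ht, div_pos_iff_of_pos_right (Real.rpow_pos_of_pos ht _)] at h
    linarith
  exact frequently_nhdsGT_zero_mul_lt_mul_self_of_tendsto hc (fun t _ => hF t) hlim hpos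

theorem frequently_nhdsLT_zero_mul_lt_mul_self (hc : 2 < c) (hF : ∀ t, HasDerivAt F (f t) t)
    (hF0 : F 0 = 0) (hf : Tendsto (fun t => f t / |t| ^ (c - 1)) (𝓝[<] 0) (𝓝 0))
    (hmono : StrictAntiOn (fun t => (f t * t - 2 * F t) / |t| ^ c) (Iio 0)) :
    ∃ᶠ t in 𝓝[<] 0, c * F t < f t * t := by
  have hneg : Tendsto Neg.neg (𝓝[>] (0 : ℝ)) (𝓝[<] 0) := by
    simpa using tendsto_neg_nhdsGT_neg (a := (0 : ℝ))
  have hreflect := frequently_nhdsGT_zero_mul_lt_mul_self (f := fun t => -f (-t))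
    (F := fun t => F (-t)) hc (fun t => by
      simpa [Function.comp_def] using (hF (-t)).comp t (hasDerivAt_neg' t))
    (by simpa using hF0) (by simpa [neg_div] using (hf.comp hneg).neg)
    fun a ha b hb hab => by
      simpa using
        hmono (mem_Iio.2 (neg_lt_zero.2 hb)) (mem_Iio.2 (neg_lt_zero.2 ha)) (neg_lt_neg hab)
  exact hneg.frequently (hreflect.mono fun t ht => by simpa using ht)

end Antiderivative

theorem stmt_2_general (N : ℕ) (p : ℝ) (hp2 : 2 ≤ p) (hpN : p < (N : ℝ))
    (f F Ft : ℝ → ℝ) (hf0 : Continuous f)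
    (hF : ∀ t : ℝ, F t = ∫ s in (0:ℝ)..t, f s)
    (hFt : ∀ t : ℝ, Ft t = f t * t - 2 * F t)
    (hf1 : Tendsto (fun t : ℝ => f t / |t| ^ (p + 2 * p / (N : ℝ) - 1)) (nhdsWithin 0 {0}ᶜ) (nhds 0))
    (hf4a : StrictAntiOn (fun t : ℝ => Ft t / |t| ^ (p + 2 * p / (N : ℝ))) (Iio 0))
    (hf4b : StrictMonoOn (fun t : ℝ => Ft t / |t| ^ (p + 2 * p / (N : ℝ))) (Ioi 0)) :
    ∃ θp θm : ℕ → ℝ,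
      (∀ n : ℕ, 0 < θp n) ∧ (∀ n : ℕ, θm n < 0) ∧
      Tendsto (fun n : ℕ => |θp n|) atTop (nhds 0) ∧
      Tendsto (fun n : ℕ => |θm n|) atTop (nhds 0) ∧
      (∀ n : ℕ, f (θp n) * θp n > (p + 2 * p / (N : ℝ)) * F (θp n)) ∧
      (∀ n : ℕ, f (θm n) * θm n > (p + 2 * p / (N : ℝ)) * F (θm n)) := by
  have hc : 2 < p + 2 * p / N := by
    have : 0 < 2 * p / N := div_pos (by linarith) (by linarith)
    linarith
  have hFderiv : ∀ t, HasDerivAt F (f t) t := fun t => by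
    rw [funext hF]
    exact (hf0.integral_hasStrictDerivAt 0 t).hasDerivAt
  have hF0 : F 0 = 0 := by rw [hF, intervalIntegral.integral_same]
  simp only [hFt] at hf4a hf4b
  obtain ⟨θp, hθp_pos, hθp_lim, hθp⟩ := exists_seq_forall_of_frequently_nhdsWithin <|
    frequently_nhdsGT_zero_mul_lt_mul_self hc hFderiv hF0 (hf1.mono_left (nhdsGT_le_nhdsNE 0)) hf4b
  obtain ⟨θm, hθm_neg, hθm_lim, hθm⟩ := exists_seq_forall_of_frequently_nhdsWithin <|
    frequently_nhdsLT_zero_mul_lt_mul_self hc hFderiv hF0 (hf1.mono_left (nhdsLT_le_nhdsNE 0)) hf4a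
  exact ⟨θp, θm, hθp_pos, hθm_neg, (tendsto_zero_iff_abs_tendsto_zero θp).1 hθp_lim,
    (tendsto_zero_iff_abs_tendsto_zero θm).1 hθm_lim, hθp, hθm⟩

theorem stmt_2 (N : ℕ) (hN : 3 ≤ N) (p : ℝ) (hp2 : 2 ≤ p) (hpN : p < (N : ℝ))
    (f F Ft : ℝ → ℝ) (hf0 : Continuous f)
    (hF : ∀ t : ℝ, F t = ∫ s in (0:ℝ)..t, f s)
    (hFt : ∀ t : ℝ, Ft t = f t * t - 2 * F t)
    (hf1 : Tendsto (fun t : ℝ => f t / |t| ^ (p + 2 * p / (N : ℝ) - 1)) (nhdsWithin 0 {0}ᶜ) (nhds 0))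
    (hf2 : Tendsto (fun t : ℝ => f t / |t| ^ ((N : ℝ) * p / ((N : ℝ) - p) - 1)) (cocompact ℝ) (nhds 0))
    (hf3 : Tendsto (fun t : ℝ => F t / |t| ^ (p + 2 * p / (N : ℝ))) (cocompact ℝ) atTop)
    (hf4a : StrictAntiOn (fun t : ℝ => Ft t / |t| ^ (p + 2 * p / (N : ℝ))) (Iio 0))
    (hf4b : StrictMonoOn (fun t : ℝ => Ft t / |t| ^ (p + 2 * p / (N : ℝ))) (Ioi 0)) :
    ∃ θp θm : ℕ → ℝ,
      (∀ n : ℕ, 0 < θp n) ∧ (∀ n : ℕ, θm n < 0) ∧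
      Tendsto (fun n : ℕ => |θp n|) atTop (nhds 0) ∧
      Tendsto (fun n : ℕ => |θm n|) atTop (nhds 0) ∧
      (∀ n : ℕ, f (θp n) * θp n > (p + 2 * p / (N : ℝ)) * F (θp n)) ∧
      (∀ n : ℕ, f (θm n) * θm n > (p + 2 * p / (N : ℝ)) * F (θm n)) :=
  stmt_2_general N p hp2 hpN f F Ft hf0 hF hFt hf1 hf4a hf4b
end

section
/- Assume f satisfies (f0)–(f4). Then there exist a sequence (λ⁺_n) of strictly positive reals and a sequence (λ⁻_n) of strictly negative reals such that |λ⁺_n| → +∞ and |λ⁻_n| → +∞ as n → ∞, and f(λ⁺_n)·λ⁺_n > p_*·F(λ⁺_n) and f(λ⁻_n)·λ⁻_n > p_*·F(λ⁻_n) for every n. (Claim 3 in the proof of Lemma 2.3.) -/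
/-! If `F t / |t| ^ q → +∞` as `|t| → ∞`, then `t ↦ F t / t ^ q` cannot be nonincreasing on any
half-line `(a, ∞)`, so by the mean value theorem its derivative `(f c * c - q * F c) / c ^ (q + 1)`
is positive at some `c > a`, for every `a`. The negative side follows by applying this to
`t ↦ F (-t)`. -/

open Filter Set MeasureTheory

lemma hasDerivAt_div_rpow {F : ℝ → ℝ} {d q x : ℝ} (hF : HasDerivAt F d x) (hx : 0 < x) :
    HasDerivAt (fun t => F t / t ^ q) ((d * x - q * F x) / x ^ (q + 1)) x := by
  have hxq : 0 < x ^ q := Real.rpow_pos_of_pos hx q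
  refine (hF.div (Real.hasDerivAt_rpow_const (Or.inl hx.ne')) hxq.ne').congr_deriv ?_
  rw [Real.rpow_add hx, Real.rpow_sub hx, Real.rpow_one, sq]
  field_simp

lemma frequently_atTop_mul_lt_deriv_mul {f F : ℝ → ℝ} {q : ℝ}
    (hF : ∀ x, 0 < x → HasDerivAt F (f x) x)
    (htop : Tendsto (fun t => F t / t ^ q) atTop atTop) :
    ∃ᶠ c in atTop, q * F c < f c * c := by
  rw [frequently_atTop]
  intro a₀
  set a := max a₀ 1
  set g : ℝ → ℝ := fun t => F t / t ^ q
  have ha : 0 < a := lt_max_of_lt_right one_pos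
  have hg : ∀ x, 0 < x → HasDerivAt g ((f x * x - q * F x) / x ^ (q + 1)) x :=
    fun x hx => hasDerivAt_div_rpow (hF x hx) hx
  obtain ⟨b, hgb, hab⟩ := ((htop.eventually_gt_atTop (g a)).and (eventually_gt_atTop a)).exists
  obtain ⟨c, hc, hslope⟩ := exists_hasDerivAt_eq_slope g _ hab
    (fun x hx => (hg x (ha.trans_le hx.1)).continuousAt.continuousWithinAt)
    (fun x hx => hg x (ha.trans hx.1))
  have hc₀ : 0 < c := ha.trans hc.1
  have hderiv_pos : 0 < (f c * c - q * F c) / c ^ (q + 1) :=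
    hslope ▸ div_pos (sub_pos.2 hgb) (sub_pos.2 hab)
  have := (div_pos_iff_of_pos_right (Real.rpow_pos_of_pos hc₀ _)).1 hderiv_pos
  exact ⟨c, (le_max_left _ _).trans hc.1.le, by linarith⟩

lemma frequently_atBot_mul_lt_deriv_mul {f F : ℝ → ℝ} {q : ℝ}
    (hF : ∀ x, x < 0 → HasDerivAt F (f x) x)
    (hbot : Tendsto (fun t => F t / |t| ^ q) atBot atTop) :
    ∃ᶠ c in atBot, q * F c < f c * c := by
  have hreflect : ∃ᶠ c in atTop, q * F (-c) < -f (-c) * c := by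
    refine frequently_atTop_mul_lt_deriv_mul (fun x hx => ?_) ?_
    · exact ((hF (-x) (neg_neg_of_pos hx)).comp x (hasDerivAt_neg x)).congr_deriv (mul_neg_one _)
    · refine (hbot.comp tendsto_neg_atTop_atBot).congr' ?_
      filter_upwards [eventually_gt_atTop 0] with t ht
      simp [abs_of_pos ht]
  refine tendsto_neg_atTop_atBot.frequently_map _ (fun c hc => ?_) hreflect
  linarith

theorem stmt_3_general (N : ℕ) (p : ℝ)
    (f F : ℝ → ℝ) (hf0 : Continuous f)
    (hF : ∀ t : ℝ, F t = ∫ s in (0:ℝ)..t, f s)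
    (hf3 : Tendsto (fun t : ℝ => F t / |t| ^ (p + 2 * p / (N : ℝ))) (cocompact ℝ) atTop) :
    ∃ lamp lamm : ℕ → ℝ,
      (∀ n : ℕ, 0 < lamp n) ∧ (∀ n : ℕ, lamm n < 0) ∧
      Tendsto (fun n : ℕ => |lamp n|) atTop atTop ∧
      Tendsto (fun n : ℕ => |lamm n|) atTop atTop ∧
      (∀ n : ℕ, f (lamp n) * lamp n > (p + 2 * p / (N : ℝ)) * F (lamp n)) ∧
      (∀ n : ℕ, f (lamm n) * lamm n > (p + 2 * p / (N : ℝ)) * F (lamm n)) := by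
  have hFd : ∀ x, HasDerivAt F (f x) x := fun x =>
    (hf0.integral_hasStrictDerivAt 0 x).hasDerivAt.congr_of_eventuallyEq (.of_forall hF)
  have htop : Tendsto (fun t => F t / t ^ (p + 2 * p / N)) atTop atTop := by
    refine (hf3.mono_left atTop_le_cocompact).congr' ?_
    filter_upwards [eventually_gt_atTop 0] with t ht
    rw [abs_of_pos ht]
  obtain ⟨lamp, hlamp_lim, hlamp⟩ := frequently_iff_seq_forall.1
    ((frequently_atTop_mul_lt_deriv_mul (fun x _ => hFd x) htop).and_eventually
      (eventually_gt_atTop 0))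
  obtain ⟨lamm, hlamm_lim, hlamm⟩ := frequently_iff_seq_forall.1
    ((frequently_atBot_mul_lt_deriv_mul (fun x _ => hFd x)
      (hf3.mono_left atBot_le_cocompact)).and_eventually (eventually_lt_atBot 0))
  exact ⟨lamp, lamm, fun n => (hlamp n).2, fun n => (hlamm n).2,
    tendsto_abs_atTop_atTop.comp hlamp_lim, tendsto_abs_atBot_atTop.comp hlamm_lim,
    fun n => (hlamp n).1, fun n => (hlamm n).1⟩

theorem stmt_3 (N : ℕ) (hN : 3 ≤ N) (p : ℝ) (hp2 : 2 ≤ p) (hpN : p < (N : ℝ))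
    (f F Ft : ℝ → ℝ) (hf0 : Continuous f)
    (hF : ∀ t : ℝ, F t = ∫ s in (0:ℝ)..t, f s)
    (hFt : ∀ t : ℝ, Ft t = f t * t - 2 * F t)
    (hf1 : Tendsto (fun t : ℝ => f t / |t| ^ (p + 2 * p / (N : ℝ) - 1)) (nhdsWithin 0 {0}ᶜ) (nhds 0))
    (hf2 : Tendsto (fun t : ℝ => f t / |t| ^ ((N : ℝ) * p / ((N : ℝ) - p) - 1)) (cocompact ℝ) (nhds 0))
    (hf3 : Tendsto (fun t : ℝ => F t / |t| ^ (p + 2 * p / (N : ℝ))) (cocompact ℝ) atTop)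
    (hf4a : StrictAntiOn (fun t : ℝ => Ft t / |t| ^ (p + 2 * p / (N : ℝ))) (Iio 0))
    (hf4b : StrictMonoOn (fun t : ℝ => Ft t / |t| ^ (p + 2 * p / (N : ℝ))) (Ioi 0)) :
    ∃ lamp lamm : ℕ → ℝ,
      (∀ n : ℕ, 0 < lamp n) ∧ (∀ n : ℕ, lamm n < 0) ∧
      Tendsto (fun n : ℕ => |lamp n|) atTop atTop ∧
      Tendsto (fun n : ℕ => |lamm n|) atTop atTop ∧
      (∀ n : ℕ, f (lamp n) * lamp n > (p + 2 * p / (N : ℝ)) * F (lamp n)) ∧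
      (∀ n : ℕ, f (lamm n) * lamm n > (p + 2 * p / (N : ℝ)) * F (lamm n)) :=
  stmt_3_general N p f F hf0 hF hf3
end

section
/- Assume f is continuous ((f0)) and satisfies (f1) and (f4). Then F̃(t) > 0 for every real t ≠ 0, i.e. f(t)·t > 2F(t) for all t ≠ 0. (Consequence of Remark 2.2, used in Claim 1 of Lemma 2.3.) -/
open Filter Set MeasureTheory

theorem stmt_5 (N : ℕ) (hN : 3 ≤ N) (p : ℝ) (hp2 : 2 ≤ p) (hpN : p < (N : ℝ))
    (f F Ft : ℝ → ℝ) (hf0 : Continuous f)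
    (hF : ∀ t : ℝ, F t = ∫ s in (0:ℝ)..t, f s)
    (hFt : ∀ t : ℝ, Ft t = f t * t - 2 * F t)
    (hf1 : Tendsto (fun t : ℝ => f t / |t| ^ (p + 2 * p / (N : ℝ) - 1)) (nhdsWithin 0 {0}ᶜ) (nhds 0))
    (hf4a : StrictAntiOn (fun t : ℝ => Ft t / |t| ^ (p + 2 * p / (N : ℝ))) (Iio 0))
    (hf4b : StrictMonoOn (fun t : ℝ => Ft t / |t| ^ (p + 2 * p / (N : ℝ))) (Ioi 0)) :
    ∀ t : ℝ, t ≠ 0 → 0 < Ft t := by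
  have hNpos : (0:ℝ) < N := by
    have : 0 < N := by omega
    exact_mod_cast this
  set q : ℝ := p + 2 * p / (N : ℝ) with hqdef
  have hppos : 0 < p := lt_of_lt_of_le two_pos hp2
  have hq2 : (2:ℝ) ≤ q := le_trans hp2 (le_add_of_nonneg_right (by positivity))
  have hqm1 : (0:ℝ) < q - 1 := by linarith
  -- f 0 = 0
  have habs : Tendsto (fun t : ℝ => |t| ^ (q-1)) (nhdsWithin 0 {0}ᶜ) (nhds 0) := by
    have h1 : Tendsto (fun x : ℝ => x ^ (q-1)) (nhds (0:ℝ)) (nhds 0) := by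
      have h := (Real.continuousAt_rpow_const 0 (q-1) (Or.inr hqm1.le)).tendsto
      simpa [Real.zero_rpow (ne_of_gt hqm1)] using h
    have h2 : Tendsto (fun t : ℝ => |t|) (nhds (0:ℝ)) (nhds 0) := by
      simpa using continuous_abs.tendsto (0:ℝ)
    exact (h1.comp h2).mono_left nhdsWithin_le_nhds
  have hf00 : f 0 = 0 := by
    have h1 : Tendsto (fun t : ℝ => f t / |t| ^ (q-1) * |t| ^ (q-1))
        (nhdsWithin 0 {0}ᶜ) (nhds (0*0)) := hf1.mul habs
    rw [zero_mul] at h1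
    have h2 : Tendsto f (nhdsWithin 0 {0}ᶜ) (nhds 0) := by
      refine h1.congr' ?_
      filter_upwards [self_mem_nhdsWithin] with t ht
      exact div_mul_cancel₀ _ (ne_of_gt (Real.rpow_pos_of_pos (abs_pos.mpr ht) _))
    exact tendsto_nhds_unique ((hf0.tendsto 0).mono_left nhdsWithin_le_nhds) h2
  -- main limit
  have hg : Tendsto (fun t : ℝ => Ft t / |t| ^ q) (nhdsWithin 0 {0}ᶜ) (nhds 0) := by
    rw [Metric.tendsto_nhdsWithin_nhds] at hf1 ⊢
    intro ε hε
    obtain ⟨δ, hδ, hδ'⟩ := hf1 (ε/4) (by positivity)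
    refine ⟨δ, hδ, ?_⟩
    intro t ht htδ
    have ht0 : t ≠ 0 := ht
    have htδ' : |t| < δ := by simpa [Real.dist_eq] using htδ
    have hfb : ∀ s : ℝ, |s| < δ → |f s| ≤ ε/4 * |s| ^ (q-1) := by
      intro s hs
      rcases eq_or_ne s 0 with rfl | hs0
      · simp [hf00, Real.zero_rpow (ne_of_gt hqm1)]
      · have h := hδ' (x := s) hs0 (by simpa [Real.dist_eq] using hs)
        rw [Real.dist_eq, sub_zero, abs_div,
          abs_of_nonneg (Real.rpow_nonneg (abs_nonneg s) _)] at h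
        have hpos : 0 < |s| ^ (q-1) := Real.rpow_pos_of_pos (abs_pos.mpr hs0) _
        rw [div_lt_iff₀ hpos] at h
        exact h.le
    have hXeq : |t| ^ (q-1) * |t| = |t| ^ q := by
      rw [← Real.rpow_add_one (abs_ne_zero.mpr ht0)]
      ring_nf
    have hX : 0 < |t| ^ q := Real.rpow_pos_of_pos (abs_pos.mpr ht0) _
    have hFb : |F t| ≤ ε/4 * |t| ^ q := by
      rw [hF t]
      have hb : ∀ x ∈ Set.uIoc (0:ℝ) t, ‖f x‖ ≤ ε/4 * |t| ^ (q-1) := by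
        intro x hx
        have hx' : x ∈ Set.uIcc (0:ℝ) t := Set.uIoc_subset_uIcc hx
        rw [Set.mem_uIcc] at hx'
        have hxt : |x| ≤ |t| := by
          rcases hx' with ⟨h1, h2⟩ | ⟨h1, h2⟩
          · rw [abs_of_nonneg h1]; exact le_trans h2 (le_abs_self t)
          · rw [abs_of_nonpos h2]
            have hx2 : -x ≤ -t := by linarith
            exact hx2.trans (neg_le_abs t)
        calc ‖f x‖ = |f x| := rfl
          _ ≤ ε/4 * |x| ^ (q-1) := hfb x (lt_of_le_of_lt hxt htδ')
          _ ≤ ε/4 * |t| ^ (q-1) := by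
              apply mul_le_mul_of_nonneg_left _ (by positivity)
              exact Real.rpow_le_rpow (abs_nonneg x) hxt (le_of_lt hqm1)
      have h := intervalIntegral.norm_integral_le_of_norm_le_const hb
      rw [sub_zero] at h
      calc |∫ s in (0:ℝ)..t, f s| ≤ ε/4 * |t| ^ (q-1) * |t| := h
        _ = ε/4 * |t| ^ q := by rw [mul_assoc, hXeq]
    have hftb : |f t * t| ≤ ε/4 * |t| ^ q := by
      rw [abs_mul]
      calc |f t| * |t| ≤ (ε/4 * |t| ^ (q-1)) * |t| :=
            mul_le_mul_of_nonneg_right (hfb t htδ') (abs_nonneg t)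
        _ = ε/4 * |t| ^ q := by rw [mul_assoc, hXeq]
    rw [Real.dist_eq, sub_zero, abs_div,
      abs_of_nonneg (Real.rpow_nonneg (abs_nonneg t) _), div_lt_iff₀ hX]
    calc |Ft t| = |f t * t - 2 * F t| := by rw [hFt]
      _ ≤ |f t * t| + |2 * F t| := abs_sub _ _
      _ = |f t * t| + 2 * |F t| := by rw [abs_mul (2:ℝ)]; norm_num
      _ ≤ ε/4 * |t| ^ q + 2 * (ε/4 * |t| ^ q) := by linarith
      _ < ε * |t| ^ q := by nlinarith
  -- nonnegativity near 0
  have hpos : ∀ t : ℝ, 0 < t → 0 ≤ Ft t / |t| ^ q := by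
    intro t ht
    have hlim : Tendsto (fun s : ℝ => Ft s / |s| ^ q) (nhdsWithin 0 (Ioi 0)) (nhds 0) :=
      hg.mono_left (nhdsWithin_mono _ (fun x hx => ne_of_gt hx))
    refine le_of_tendsto hlim ?_
    filter_upwards [Ioo_mem_nhdsGT_of_mem (left_mem_Ico.mpr ht)] with s hs
    exact (hf4b hs.1 ht hs.2).le
  have hneg : ∀ t : ℝ, t < 0 → 0 ≤ Ft t / |t| ^ q := by
    intro t ht
    have hlim : Tendsto (fun s : ℝ => Ft s / |s| ^ q) (nhdsWithin 0 (Iio 0)) (nhds 0) :=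
      hg.mono_left (nhdsWithin_mono _ (fun x hx => ne_of_lt hx))
    refine le_of_tendsto hlim ?_
    filter_upwards [Ioo_mem_nhdsLT_of_mem (right_mem_Ioc.mpr ht)] with s hs
    exact (hf4a ht hs.2 hs.1).le
  intro t ht
  have hX : 0 < |t| ^ q := Real.rpow_pos_of_pos (abs_pos.mpr ht) _
  have hgt : 0 < Ft t / |t| ^ q := by
    rcases ht.lt_or_gt with h | h
    · have h2 : t < t/2 := by linarith
      have h20 : t/2 < 0 := by linarith
      exact lt_of_le_of_lt (hneg (t/2) h20) (hf4a h h20 h2)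
    · have h2 : t/2 < t := by linarith
      have h20 : 0 < t/2 := by linarith
      exact lt_of_le_of_lt (hpos (t/2) h20) (hf4b h20 h h2)
  have := mul_pos hgt hX
  rwa [div_mul_cancel₀ _ (ne_of_gt hX)] at this
end

section
/- Assume f satisfies (f0)–(f4). Then the function t ↦ f(t)/t^{p_*−1} is strictly increasing on (0,+∞). (Intermediate step in the proof of Claim 5 of Lemma 2.3: f(t)/t^{p_*−1} = F̃(t)/t^{p_*} + 2F(t)/t^{p_*}, where the first summand is strictly increasing by (f4) and the second is nondecreasing by Claim 4.) -/
open Filter Set MeasureTheory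

open Topology

/-!
Write `P = p_*` and `g(t) = F̃(t)/t^P`, so that `f(t)/t^(P-1) = g(t) + 2 F(t)/t^P`; `g` is strictly
increasing by (f4), and it remains to see that `F(t)/t^P` is nondecreasing, i.e. that
`P F(t) ≤ t f(t)`. Since `(F(r)/r²)' = g(r) r^(P-3) ≤ g(t) r^(P-3)` for `0 < r < t` and
`F(r)/r² → 0` as `r → 0⁺` (by (f1) and L'Hôpital), comparing derivatives on `(0, t]` gives
`F(t)/t² ≤ g(t) t^(P-2)/(P-2)`, which is `(P - 2) F(t) ≤ F̃(t)`.
-/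

lemma tendsto_rpow_nhdsGT_zero {q : ℝ} (hq : 0 < q) :
    Tendsto (fun r : ℝ => r ^ q) (𝓝[>] 0) (𝓝 0) := by
  simpa [Real.zero_rpow hq.ne'] using
    (Real.continuousAt_rpow_const 0 q (Or.inr hq.le)).tendsto.mono_left nhdsWithin_le_nhds

lemma tendsto_div_self_of_tendsto_div_abs_rpow {f : ℝ → ℝ} {P : ℝ} (hP : 2 < P)
    (hf : Tendsto (fun t => f t / |t| ^ (P - 1)) (𝓝[≠] 0) (𝓝 0)) :
    Tendsto (fun t => f t / t) (𝓝[>] 0) (𝓝 0) := by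
  have h := (hf.mono_left (nhdsWithin_mono 0 fun t (ht : 0 < t) => ht.ne')).mul
    (tendsto_rpow_nhdsGT_zero (sub_pos.2 hP))
  rw [zero_mul] at h
  refine h.congr' ?_
  filter_upwards [self_mem_nhdsWithin] with t (ht : 0 < t)
  have hsplit : t ^ (P - 1) = t ^ (P - 2) * t := by
    rw [← Real.rpow_add_one ht.ne']; ring_nf
  have := Real.rpow_pos_of_pos ht (P - 2)
  rw [abs_of_pos ht, hsplit]
  field_simp

lemma tendsto_div_sq_of_hasDerivAt {f F : ℝ → ℝ} (hF : ∀ r, 0 < r → HasDerivAt F (f r) r)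
    (hF0 : Tendsto F (𝓝[>] 0) (𝓝 0)) (hf : Tendsto (fun r => f r / r) (𝓝[>] 0) (𝓝 0)) :
    Tendsto (fun r => F r / r ^ 2) (𝓝[>] 0) (𝓝 0) := by
  refine HasDerivAt.lhopital_zero_nhdsGT (f' := f) (g' := fun r => 2 * r) ?_
    (Eventually.of_forall fun r => by simpa using hasDerivAt_pow 2 r) ?_ hF0 ?_ ?_
  · filter_upwards [self_mem_nhdsWithin] with r hr using hF r hr
  · filter_upwards [self_mem_nhdsWithin] with r (hr : 0 < r)
    positivity
  · simpa using ((continuous_pow 2).tendsto (0 : ℝ)).mono_left nhdsWithin_le_nhds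
  · simpa [div_div, mul_comm] using hf.div_const 2

lemma le_mul_rpow_div_of_hasDerivAt_le {G G' : ℝ → ℝ} {c q t : ℝ} (hq : 0 < q) (ht : 0 < t)
    (hG : ∀ r ∈ Ioc 0 t, HasDerivAt G (G' r) r)
    (hG' : ∀ r ∈ Ioo 0 t, G' r ≤ c * r ^ (q - 1))
    (hG0 : Tendsto G (𝓝[>] 0) (𝓝 0)) :
    G t ≤ c * t ^ q / q := by
  set H := fun r => G r - c * r ^ q / q
  have hH : ∀ r ∈ Ioc 0 t, HasDerivAt H (G' r - c * r ^ (q - 1)) r := fun r hr => by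
    have hpow :=
      ((Real.hasDerivAt_rpow_const (p := q) (Or.inl hr.1.ne')).const_mul c).div_const q
    exact ((hG r hr).sub hpow).congr_deriv (by field_simp)
  have hanti : AntitoneOn H (Ioc 0 t) := by
    refine antitoneOn_of_hasDerivWithinAt_nonpos (convex_Ioc 0 t)
      (f' := fun r => G' r - c * r ^ (q - 1))
      (fun r hr => (hH r hr).continuousAt.continuousWithinAt) (fun r hr => ?_) (fun r hr => ?_)
    · rw [interior_Ioc] at hr
      exact (hH r (Ioo_subset_Ioc_self hr)).hasDerivWithinAt
    · rw [interior_Ioc] at hr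
      exact sub_nonpos.2 (hG' r hr)
  have hH0 : Tendsto H (𝓝[>] 0) (𝓝 0) := by
    simpa using hG0.sub (((tendsto_rpow_nhdsGT_zero hq).const_mul c).div_const q)
  have hHt : H t ≤ 0 := by
    refine ge_of_tendsto hH0 ?_
    filter_upwards [Ioc_mem_nhdsGT ht] with r hr
    exact hanti hr ⟨ht, le_rfl⟩ hr.2
  simpa [H, sub_nonpos] using hHt

lemma mul_le_of_monotoneOn_div_rpow {f F : ℝ → ℝ} {P t : ℝ} (hP : 2 < P) (ht : 0 < t)
    (hF : ∀ r, 0 < r → HasDerivAt F (f r) r)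
    (hF0 : Tendsto (fun r => F r / r ^ 2) (𝓝[>] 0) (𝓝 0))
    (hmono : MonotoneOn (fun r => (f r * r - 2 * F r) / r ^ P) (Ioi 0)) :
    P * F t ≤ t * f t := by
  have hle := le_mul_rpow_div_of_hasDerivAt_le (sub_pos.2 hP) ht
    (G := fun r => F r / r ^ 2) (G' := fun r => (f r * r - 2 * F r) / r ^ 3)
    (c := (f t * t - 2 * F t) / t ^ P)
    (fun r hr => ((hF r hr.1).div (hasDerivAt_pow 2 r) (pow_pos hr.1 2).ne').congr_deriv (by
      have := hr.1.ne'
      field_simp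
      ring))
    (fun r hr => by
      have hr3 : r ^ (P - 2 - 1) = r ^ P / r ^ 3 := by
        rw [sub_sub]; exact_mod_cast Real.rpow_sub_natCast hr.1.ne' P 3
      have := Real.rpow_pos_of_pos hr.1 P
      calc (f r * r - 2 * F r) / r ^ 3
          = (f r * r - 2 * F r) / r ^ P * (r ^ P / r ^ 3) := by field_simp
        _ ≤ _ := by
          rw [hr3]
          exact mul_le_mul_of_nonneg_right (hmono hr.1 ht hr.2.le)
            (div_nonneg this.le (pow_pos hr.1 3).le))
    hF0
  have htP := Real.rpow_pos_of_pos ht P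
  have ht2 : t ^ (P - 2) = t ^ P / t ^ 2 := by exact_mod_cast Real.rpow_sub_natCast ht.ne' P 2
  rw [ht2, le_div_iff₀ (by linarith)] at hle
  field_simp at hle
  nlinarith

lemma monotoneOn_div_rpow_of_mul_le {f F : ℝ → ℝ} {P : ℝ}
    (hF : ∀ r, 0 < r → HasDerivAt F (f r) r) (hle : ∀ r, 0 < r → P * F r ≤ r * f r) :
    MonotoneOn (fun r => F r / r ^ P) (Ioi 0) := by
  have hderiv : ∀ r, 0 < r → HasDerivAt (fun r => F r / r ^ P)
      ((f r * r ^ P - F r * (P * r ^ (P - 1))) / (r ^ P) ^ 2) r := fun r hr =>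
    (hF r hr).div (Real.hasDerivAt_rpow_const (Or.inl hr.ne')) (Real.rpow_pos_of_pos hr P).ne'
  refine monotoneOn_of_hasDerivWithinAt_nonneg (convex_Ioi 0)
    (f' := fun r => (f r * r ^ P - F r * (P * r ^ (P - 1))) / (r ^ P) ^ 2)
    (fun r hr => (hderiv r hr).continuousAt.continuousWithinAt) (fun r hr => ?_) (fun r hr => ?_)
  · rw [interior_Ioi] at hr ⊢
    exact (hderiv r hr).hasDerivWithinAt
  · rw [interior_Ioi] at hr
    have hr' : (0 : ℝ) < r := hr
    have := Real.rpow_pos_of_pos hr' P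
    have := hle r hr'
    rw [Real.rpow_sub_one hr'.ne']
    apply div_nonneg _ (sq_nonneg _)
    field_simp
    nlinarith

theorem stmt_8_general (N : ℕ) (hN : 3 ≤ N) (p : ℝ) (hp2 : 2 ≤ p)
    (f F Ft : ℝ → ℝ) (hf0 : Continuous f)
    (hF : ∀ t : ℝ, F t = ∫ s in (0:ℝ)..t, f s)
    (hFt : ∀ t : ℝ, Ft t = f t * t - 2 * F t)
    (hf1 : Tendsto (fun t : ℝ => f t / |t| ^ (p + 2 * p / (N : ℝ) - 1)) (nhdsWithin 0 {0}ᶜ) (nhds 0))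
    (hf4b : StrictMonoOn (fun t : ℝ => Ft t / |t| ^ (p + 2 * p / (N : ℝ))) (Ioi 0)) :
    StrictMonoOn (fun t : ℝ => f t / t ^ ((p + 2 * p / (N : ℝ)) - 1)) (Ioi 0) := by
  set P := p + 2 * p / (N : ℝ)
  have hP : 2 < P := by
    have : (3 : ℝ) ≤ N := by exact_mod_cast hN
    have : 0 < 2 * p / (N : ℝ) := by positivity
    linarith
  obtain rfl : Ft = fun t => f t * t - 2 * F t := funext hFt
  have hderiv (r : ℝ) : HasDerivAt F (f r) r :=
    (hf0.integral_hasStrictDerivAt 0 r).hasDerivAt.congr_of_eventuallyEq (.of_forall hF)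
  have hF0 : Tendsto F (𝓝[>] 0) (𝓝 0) := by
    simpa [hF] using (hderiv 0).continuousAt.tendsto.mono_left nhdsWithin_le_nhds
  have hg : StrictMonoOn (fun t => (f t * t - 2 * F t) / t ^ P) (Ioi 0) := fun a ha b hb hab => by
    simpa only [abs_of_pos (show (0 : ℝ) < a from ha), abs_of_pos (show (0 : ℝ) < b from hb)]
      using hf4b ha hb hab
  have hFP : MonotoneOn (fun t => F t / t ^ P) (Ioi 0) :=
    monotoneOn_div_rpow_of_mul_le (fun r _ => hderiv r) fun t ht =>
      mul_le_of_monotoneOn_div_rpow hP ht (fun r _ => hderiv r)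
        (tendsto_div_sq_of_hasDerivAt (fun r _ => hderiv r) hF0
          (tendsto_div_self_of_tendsto_div_abs_rpow hP hf1)) hg.monotoneOn
  have hsplit {t : ℝ} (ht : 0 < t) :
      f t / t ^ (P - 1) = (f t * t - 2 * F t) / t ^ P + 2 * (F t / t ^ P) := by
    have := Real.rpow_pos_of_pos ht P
    rw [Real.rpow_sub_one ht.ne']
    field_simp
    ring
  intro a ha b hb hab
  simp only [hsplit (show (0 : ℝ) < a from ha), hsplit (show (0 : ℝ) < b from hb)]
  linarith [hg ha hb hab, hFP ha hb hab.le]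

theorem stmt_8 (N : ℕ) (hN : 3 ≤ N) (p : ℝ) (hp2 : 2 ≤ p) (hpN : p < (N : ℝ))
    (f F Ft : ℝ → ℝ) (hf0 : Continuous f)
    (hF : ∀ t : ℝ, F t = ∫ s in (0:ℝ)..t, f s)
    (hFt : ∀ t : ℝ, Ft t = f t * t - 2 * F t)
    (hf1 : Tendsto (fun t : ℝ => f t / |t| ^ (p + 2 * p / (N : ℝ) - 1)) (nhdsWithin 0 {0}ᶜ) (nhds 0))
    (hf2 : Tendsto (fun t : ℝ => f t / |t| ^ ((N : ℝ) * p / ((N : ℝ) - p) - 1)) (cocompact ℝ) (nhds 0))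
    (hf3 : Tendsto (fun t : ℝ => F t / |t| ^ (p + 2 * p / (N : ℝ))) (cocompact ℝ) atTop)
    (hf4a : StrictAntiOn (fun t : ℝ => Ft t / |t| ^ (p + 2 * p / (N : ℝ))) (Iio 0))
    (hf4b : StrictMonoOn (fun t : ℝ => Ft t / |t| ^ (p + 2 * p / (N : ℝ))) (Ioi 0)) :
    StrictMonoOn (fun t : ℝ => f t / t ^ ((p + 2 * p / (N : ℝ)) - 1)) (Ioi 0) :=
  stmt_8_general N hN p hp2 f F Ft hf0 hF hFt hf1 hf4b
end

section
/- Assume f is continuous ((f0)) and satisfies (f1) and (f2). Let (u_n) be a sequence of measurable functions from ℝ^N to ℝ such that sup_n ∫_{ℝ^N} |u_n|^{p^*} dx < +∞ and ∫_{ℝ^N} |u_n|^{p_*} dx → 0 as n → ∞. Then ∫_{ℝ^N} F(u_n) dx → 0 and ∫_{ℝ^N} F̃(u_n) dx → 0 as n → ∞. (Lemma 2.1(ii), stated with the L^{p^*}-bound that the Sobolev bound yields.) -/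
/-!
By (f0)–(f2), for every `ε > 0` there is `C_ε` with `|f t| ≤ ε |t|^(p^* - 1) + C_ε |t|^(p_* - 1)`:
the two limits handle `t` near `0` and near `∞`, and compactness handles the rest. Integrating
and multiplying by `t` gives bounds of the same shape for `F` and `F̃`, with exponents `p^*` and
`p_*`. Hence `|∫ G(u_n)| ≤ ε C + C_ε ∫ |u_n|^(p_*)` for `G = F, F̃`, whose `limsup` is at most `ε C`.
-/

open Filter Set MeasureTheory Topology

def EpsilonPowerBound (G : ℝ → ℝ) (a b : ℝ) : Prop :=
  ∀ ε > 0, ∃ D ≥ 0, ∀ t, |G t| ≤ ε * |t| ^ a + D * |t| ^ b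

lemma abs_rpow_sub_one_mul_abs (t : ℝ) {a : ℝ} (ha : a ≠ 0) : |t| ^ (a - 1) * |t| = |t| ^ a := by
  rw [← Real.rpow_add_one' (abs_nonneg t) (by simpa using ha), sub_add_cancel]

lemma abs_le_mul_rpow_of_abs_div_le {x t c ε : ℝ} (ht : t ≠ 0) (h : |x / |t| ^ c| ≤ ε) :
    |x| ≤ ε * |t| ^ c := by
  have hpos : 0 < |t| ^ c := Real.rpow_pos_of_pos (abs_pos.2 ht) c
  rwa [abs_div, abs_of_pos hpos, div_le_iff₀ hpos] at h

lemma eventually_abs_le_mul_rpow_of_tendsto_div {f : ℝ → ℝ} {c ε : ℝ} {l : Filter ℝ}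
    (hl : ∀ᶠ t in l, t ≠ 0) (h : Tendsto (fun t => f t / |t| ^ c) l (𝓝 0)) (hε : 0 < ε) :
    ∀ᶠ t in l, |f t| ≤ ε * |t| ^ c := by
  have habs := h.abs
  rw [abs_zero] at habs
  filter_upwards [hl, habs.eventually (ge_mem_nhds hε)] with t ht hle
  exact abs_le_mul_rpow_of_abs_div_le ht hle

lemma exists_abs_le_rpow_of_tendsto_div_nhdsNE {f : ℝ → ℝ} {b : ℝ} (hf : ContinuousAt f 0)
    (hb : 0 < b) (h : Tendsto (fun t => f t / |t| ^ b) (𝓝[≠] 0) (𝓝 0)) :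
    ∃ δ > 0, ∀ t, |t| < δ → |f t| ≤ |t| ^ b := by
  have hbound : ∀ᶠ t in 𝓝[≠] 0, |f t| ≤ 1 * |t| ^ b :=
    eventually_abs_le_mul_rpow_of_tendsto_div self_mem_nhdsWithin h one_pos
  have hpow : Tendsto (fun t : ℝ => |t| ^ b) (𝓝[≠] 0) (𝓝 0) := by
    have hcont : Continuous fun t : ℝ => |t| ^ b :=
      continuous_abs.rpow_const fun _ => Or.inr hb.le
    exact (hcont.tendsto' 0 0 (by simp [Real.zero_rpow hb.ne'])).mono_left nhdsWithin_le_nhds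
  have hf0 : f 0 = 0 :=
    tendsto_nhds_unique (hf.tendsto.mono_left nhdsWithin_le_nhds)
      (squeeze_zero_norm' (by simpa using hbound) hpow)
  obtain ⟨δ, hδ, hball⟩ := Metric.eventually_nhds_iff.1 (eventually_nhdsWithin_iff.1 hbound)
  refine ⟨δ, hδ, fun t ht => ?_⟩
  rcases eq_or_ne t 0 with rfl | ht0
  · simpa [hf0] using Real.rpow_nonneg (le_refl (0 : ℝ)) b
  · simpa using hball (by simpa using ht) ht0

namespace EpsilonPowerBound

variable {G H : ℝ → ℝ} {a b : ℝ}

theorem of_tendsto_div (hG : Continuous G) (hb : 0 < b)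
    (h0 : Tendsto (fun t => G t / |t| ^ b) (𝓝[≠] 0) (𝓝 0))
    (hinf : Tendsto (fun t => G t / |t| ^ a) (cocompact ℝ) (𝓝 0)) :
    EpsilonPowerBound G a b := by
  obtain ⟨δ, hδ, hsmall⟩ := exists_abs_le_rpow_of_tendsto_div_nhdsNE hG.continuousAt hb h0
  intro ε hε
  obtain ⟨K, hK, hlarge⟩ := mem_cocompact.1 <|
    eventually_abs_le_mul_rpow_of_tendsto_div isCompact_singleton.compl_mem_cocompact hinf hε
  obtain ⟨B, hB⟩ := hK.exists_bound_of_continuousOn hG.continuousOn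
  have hδb : 0 < δ ^ b := Real.rpow_pos_of_pos hδ b
  refine ⟨1 + max B 0 / δ ^ b, by positivity, fun t => ?_⟩
  have hεa : 0 ≤ ε * |t| ^ a := by positivity
  have hBt : 0 ≤ max B 0 / δ ^ b * |t| ^ b := by positivity
  rw [add_mul, one_mul]
  rcases lt_or_ge |t| δ with htδ | htδ
  · linarith [hsmall t htδ]
  by_cases htK : t ∈ K
  · have hGB : |G t| ≤ max B 0 := (hB t htK).trans (le_max_left _ _)
    have hBδ : max B 0 ≤ max B 0 / δ ^ b * |t| ^ b := by
      rw [div_mul_eq_mul_div, le_div_iff₀ hδb]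
      exact mul_le_mul_of_nonneg_left (Real.rpow_le_rpow hδ.le htδ hb.le) (le_max_right _ _)
    linarith [Real.rpow_nonneg (abs_nonneg t) b]
  · have hGε : |G t| ≤ ε * |t| ^ a := hlarge htK
    linarith [Real.rpow_nonneg (abs_nonneg t) b]

theorem mul_id (hG : EpsilonPowerBound G (a - 1) (b - 1)) (ha : a ≠ 0) (hb : b ≠ 0) :
    EpsilonPowerBound (fun t => G t * t) a b := by
  intro ε hε
  obtain ⟨D, hD, hGD⟩ := hG ε hε
  refine ⟨D, hD, fun t => ?_⟩
  calc |G t * t| = |G t| * |t| := abs_mul _ _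
    _ ≤ (ε * |t| ^ (a - 1) + D * |t| ^ (b - 1)) * |t| := by gcongr; exact hGD t
    _ = ε * |t| ^ a + D * |t| ^ b := by
      rw [add_mul, mul_assoc, mul_assoc, abs_rpow_sub_one_mul_abs t ha,
        abs_rpow_sub_one_mul_abs t hb]

theorem primitive (hG : EpsilonPowerBound G (a - 1) (b - 1)) (ha : 1 ≤ a) (hb : 1 ≤ b) :
    EpsilonPowerBound (fun t => ∫ s in (0 : ℝ)..t, G s) a b := by
  intro ε hε
  obtain ⟨D, hD, hGD⟩ := hG ε hε
  refine ⟨D, hD, fun t => ?_⟩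
  have hbound : ∀ s ∈ uIoc 0 t, ‖G s‖ ≤ ε * |t| ^ (a - 1) + D * |t| ^ (b - 1) := by
    intro s hs
    have hst : |s| ≤ |t| := by
      simpa using abs_sub_left_of_mem_uIcc (uIoc_subset_uIcc hs)
    calc ‖G s‖ ≤ ε * |s| ^ (a - 1) + D * |s| ^ (b - 1) := hGD s
      _ ≤ ε * |t| ^ (a - 1) + D * |t| ^ (b - 1) := by gcongr
  calc |∫ s in (0 : ℝ)..t, G s| ≤ (ε * |t| ^ (a - 1) + D * |t| ^ (b - 1)) * |t - 0| :=
        intervalIntegral.norm_integral_le_of_norm_le_const hbound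
    _ = ε * |t| ^ a + D * |t| ^ b := by
      rw [sub_zero, add_mul, mul_assoc, mul_assoc, abs_rpow_sub_one_mul_abs t (by positivity),
        abs_rpow_sub_one_mul_abs t (by positivity)]

theorem sub (hG : EpsilonPowerBound G a b) (hH : EpsilonPowerBound H a b) :
    EpsilonPowerBound (fun t => G t - H t) a b := by
  intro ε hε
  obtain ⟨D₁, hD₁, hG₁⟩ := hG (ε / 2) (half_pos hε)
  obtain ⟨D₂, hD₂, hH₂⟩ := hH (ε / 2) (half_pos hε)
  refine ⟨D₁ + D₂, add_nonneg hD₁ hD₂, fun t => ?_⟩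
  calc |G t - H t| ≤ |G t| + |H t| := abs_sub _ _
    _ ≤ (ε / 2 * |t| ^ a + D₁ * |t| ^ b) + (ε / 2 * |t| ^ a + D₂ * |t| ^ b) :=
      add_le_add (hG₁ t) (hH₂ t)
    _ = ε * |t| ^ a + (D₁ + D₂) * |t| ^ b := by ring

theorem const_mul (hG : EpsilonPowerBound G a b) (c : ℝ) :
    EpsilonPowerBound (fun t => c * G t) a b := by
  intro ε hε
  obtain ⟨D, hD, hGD⟩ := hG (ε / (|c| + 1)) (by positivity)
  refine ⟨|c| * D, by positivity, fun t => ?_⟩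
  have hcε : |c| * (ε / (|c| + 1)) ≤ ε := by
    rw [mul_div_assoc', div_le_iff₀ (by positivity)]
    nlinarith
  calc |c * G t| = |c| * |G t| := abs_mul _ _
    _ ≤ |c| * (ε / (|c| + 1) * |t| ^ a + D * |t| ^ b) := by gcongr; exact hGD t
    _ = |c| * (ε / (|c| + 1)) * |t| ^ a + |c| * D * |t| ^ b := by ring
    _ ≤ ε * |t| ^ a + |c| * D * |t| ^ b := by gcongr

variable {α ι : Type*} [MeasurableSpace α] {μ : Measure α}

lemma norm_integral_comp_le {v : α → ℝ} {ε D : ℝ}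
    (hG : ∀ t, |G t| ≤ ε * |t| ^ a + D * |t| ^ b)
    (hva : Integrable (fun x => |v x| ^ a) μ) (hvb : Integrable (fun x => |v x| ^ b) μ) :
    ‖∫ x, G (v x) ∂μ‖ ≤ ε * ∫ x, |v x| ^ a ∂μ + D * ∫ x, |v x| ^ b ∂μ := by
  calc ‖∫ x, G (v x) ∂μ‖ ≤ ∫ x, ε * |v x| ^ a + D * |v x| ^ b ∂μ :=
        norm_integral_le_of_norm_le ((hva.const_mul ε).add (hvb.const_mul D))
          (Eventually.of_forall fun x => hG (v x))
    _ = ε * ∫ x, |v x| ^ a ∂μ + D * ∫ x, |v x| ^ b ∂μ := by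
      rw [integral_add (hva.const_mul ε) (hvb.const_mul D), integral_const_mul,
        integral_const_mul]

theorem tendsto_integral_comp (hG : EpsilonPowerBound G a b) {l : Filter ι} {u : ι → α → ℝ}
    (hua : ∀ i, Integrable (fun x => |u i x| ^ a) μ)
    (hub : ∀ i, Integrable (fun x => |u i x| ^ b) μ)
    {C : ℝ} (hC : ∀ i, ∫ x, |u i x| ^ a ∂μ ≤ C)
    (hlim : Tendsto (fun i => ∫ x, |u i x| ^ b ∂μ) l (𝓝 0)) :
    Tendsto (fun i => ∫ x, G (u i x) ∂μ) l (𝓝 0) := by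
  rw [NormedAddGroup.tendsto_nhds_zero]
  intro ε hε
  obtain ⟨η, hη, hηC⟩ := exists_pos_mul_lt (half_pos hε) C
  obtain ⟨D, -, hD⟩ := hG η hη
  have htail : ∀ᶠ i in l, D * ∫ x, |u i x| ^ b ∂μ < ε / 2 := by
    have hDlim := hlim.const_mul D
    rw [mul_zero] at hDlim
    exact hDlim.eventually (gt_mem_nhds (half_pos hε))
  filter_upwards [htail] with i hi
  have hηi : η * ∫ x, |u i x| ^ a ∂μ ≤ C * η := by
    rw [mul_comm C]; exact mul_le_mul_of_nonneg_left (hC i) hη.le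
  linarith [norm_integral_comp_le hD (hua i) (hub i)]

end EpsilonPowerBound

theorem stmt_13_general (N : ℕ) (p : ℝ) (hp2 : 2 ≤ p) (hpN : p < (N : ℝ))
    (f F Ft : ℝ → ℝ) (hf0 : Continuous f)
    (hF : ∀ t : ℝ, F t = ∫ s in (0:ℝ)..t, f s)
    (hFt : ∀ t : ℝ, Ft t = f t * t - 2 * F t)
    (hf1 : Tendsto (fun t : ℝ => f t / |t| ^ (p + 2 * p / (N : ℝ) - 1)) (nhdsWithin 0 {0}ᶜ) (nhds 0))
    (hf2 : Tendsto (fun t : ℝ => f t / |t| ^ ((N : ℝ) * p / ((N : ℝ) - p) - 1)) (cocompact ℝ) (nhds 0))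
    (u : ℕ → (Fin N → ℝ) → ℝ)
    (hint1 : ∀ n : ℕ, Integrable (fun x : Fin N → ℝ => |u n x| ^ ((N : ℝ) * p / ((N : ℝ) - p))))
    (hint2 : ∀ n : ℕ, Integrable (fun x : Fin N → ℝ => |u n x| ^ (p + 2 * p / (N : ℝ))))
    (C : ℝ) (hC : ∀ n : ℕ, (∫ x : Fin N → ℝ, |u n x| ^ ((N : ℝ) * p / ((N : ℝ) - p))) ≤ C)
    (hto0 : Tendsto (fun n : ℕ => ∫ x : Fin N → ℝ, |u n x| ^ (p + 2 * p / (N : ℝ))) atTop (nhds 0)) :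
    Tendsto (fun n : ℕ => ∫ x : Fin N → ℝ, F (u n x)) atTop (nhds 0) ∧
    Tendsto (fun n : ℕ => ∫ x : Fin N → ℝ, Ft (u n x)) atTop (nhds 0) := by
  obtain rfl : F = fun t => ∫ s in (0:ℝ)..t, f s := funext hF
  obtain rfl : Ft = fun t => f t * t - 2 * ∫ s in (0:ℝ)..t, f s := funext hFt
  have hNp : 0 < (N : ℝ) - p := sub_pos.2 hpN
  have hr : 1 < p + 2 * p / N := by
    have : 0 ≤ 2 * p / N := div_nonneg (by linarith) N.cast_nonneg
    linarith
  have hq : 1 ≤ N * p / (N - p) := by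
    rw [le_div_iff₀ hNp]
    nlinarith
  have hf := EpsilonPowerBound.of_tendsto_div hf0 (sub_pos.2 hr) hf1 hf2
  have hFb := hf.primitive hq hr.le
  have hFtb := (hf.mul_id (by linarith) (by linarith)).sub (hFb.const_mul 2)
  exact ⟨hFb.tendsto_integral_comp hint1 hint2 hC hto0,
    hFtb.tendsto_integral_comp hint1 hint2 hC hto0⟩

theorem stmt_13 (N : ℕ) (hN : 3 ≤ N) (p : ℝ) (hp2 : 2 ≤ p) (hpN : p < (N : ℝ))
    (f F Ft : ℝ → ℝ) (hf0 : Continuous f)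
    (hF : ∀ t : ℝ, F t = ∫ s in (0:ℝ)..t, f s)
    (hFt : ∀ t : ℝ, Ft t = f t * t - 2 * F t)
    (hf1 : Tendsto (fun t : ℝ => f t / |t| ^ (p + 2 * p / (N : ℝ) - 1)) (nhdsWithin 0 {0}ᶜ) (nhds 0))
    (hf2 : Tendsto (fun t : ℝ => f t / |t| ^ ((N : ℝ) * p / ((N : ℝ) - p) - 1)) (cocompact ℝ) (nhds 0))
    (u : ℕ → (Fin N → ℝ) → ℝ) (hmeas : ∀ n : ℕ, Measurable (u n))
    (hint1 : ∀ n : ℕ, Integrable (fun x : Fin N → ℝ => |u n x| ^ ((N : ℝ) * p / ((N : ℝ) - p))))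
    (hint2 : ∀ n : ℕ, Integrable (fun x : Fin N → ℝ => |u n x| ^ (p + 2 * p / (N : ℝ))))
    (C : ℝ) (hC : ∀ n : ℕ, (∫ x : Fin N → ℝ, |u n x| ^ ((N : ℝ) * p / ((N : ℝ) - p))) ≤ C)
    (hto0 : Tendsto (fun n : ℕ => ∫ x : Fin N → ℝ, |u n x| ^ (p + 2 * p / (N : ℝ))) atTop (nhds 0)) :
    Tendsto (fun n : ℕ => ∫ x : Fin N → ℝ, F (u n x)) atTop (nhds 0) ∧
    Tendsto (fun n : ℕ => ∫ x : Fin N → ℝ, Ft (u n x)) atTop (nhds 0) :=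
  stmt_13_general N p hp2 hpN f F Ft hf0 hF hFt hf1 hf2 u hint1 hint2 C hC hto0
end

section
/- Assume f is continuous ((f0)) and satisfies (f1) and (f2). Let (u_n) and (v_n) be sequences of measurable functions from ℝ^N to ℝ such that sup_n ∫_{ℝ^N} |u_n|^{p^*} dx < +∞, sup_n ∫_{ℝ^N} |u_n|^{p_*} dx < +∞, sup_n ∫_{ℝ^N} |v_n|^{p^*} dx < +∞, and ∫_{ℝ^N} |v_n|^{p_*} dx → 0 as n → ∞. Then ∫_{ℝ^N} f(u_n)·v_n dx → 0 as n → ∞. (Lemma 2.1(iii), stated with the Lebesgue-norm bounds that the Sobolev bounds yield.) -/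
/-!
By (f1), (f2) and continuity, for every `ε > 0` there is `K` with
`|f t| ≤ ε |t|^(p^* - 1) + K |t|^(p_* - 1)`. Hölder's inequality with exponents `r / (r - 1)` and
`r` bounds `∫ |u|^(r-1) |v|` by `‖u‖_r^(r-1) ‖v‖_r`. For `r = p^*` this is bounded uniformly in
`n`, so that term contributes at most a multiple of `ε`; for `r = p_*` it tends to zero because
`‖v_n‖_(p_*) → 0`.
-/

open Filter Set MeasureTheory Topology

section Holder

variable {α : Type*} [MeasurableSpace α] {μ : Measure α} {g h : α → ℝ} {r : ℝ}

lemma memLp_ofReal_of_integrable_abs_rpow (hg : AEStronglyMeasurable g μ) (hr : 0 < r)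
    (hint : Integrable (fun x => |g x| ^ r) μ) : MemLp g (ENNReal.ofReal r) μ :=
  (integrable_norm_rpow_iff hg (by simpa using hr) ENNReal.ofReal_ne_top).1
    (by simpa [ENNReal.toReal_ofReal hr.le] using hint)

lemma memLp_abs_rpow_sub_one (hg : AEStronglyMeasurable g μ) (hr : 1 < r)
    (hint : Integrable (fun x => |g x| ^ r) μ) :
    MemLp (fun x => |g x| ^ (r - 1)) (ENNReal.ofReal (r / (r - 1))) μ := by
  have hr1 : 0 < r - 1 := by linarith
  refine memLp_ofReal_of_integrable_abs_rpow
    ((continuous_abs.rpow_const fun _ => Or.inr hr1.le).comp_aestronglyMeasurable hg)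
    (by positivity) (hint.congr (ae_of_all _ fun x => ?_))
  beta_reduce
  rw [abs_of_nonneg (Real.rpow_nonneg (abs_nonneg (g x)) _), ← Real.rpow_mul (abs_nonneg _),
    mul_div_cancel₀ _ hr1.ne']

lemma holderConjugate_div_sub_one (hr : 1 < r) : (r / (r - 1)).HolderConjugate r :=
  (Real.HolderConjugate.conjExponent hr).symm

lemma integrable_abs_rpow_sub_one_mul_abs (hg : AEStronglyMeasurable g μ)
    (hh : AEStronglyMeasurable h μ) (hr : 1 < r) (hgint : Integrable (fun x => |g x| ^ r) μ)
    (hhint : Integrable (fun x => |h x| ^ r) μ) :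
    Integrable (fun x => |g x| ^ (r - 1) * |h x|) μ := by
  have := (holderConjugate_div_sub_one hr).ennrealOfReal
  exact (memLp_abs_rpow_sub_one hg hr hgint).integrable_mul
    (memLp_ofReal_of_integrable_abs_rpow hh (by linarith) hhint).abs

lemma integral_abs_rpow_sub_one_mul_abs_le (hg : AEStronglyMeasurable g μ)
    (hh : AEStronglyMeasurable h μ) (hr : 1 < r) (hgint : Integrable (fun x => |g x| ^ r) μ)
    (hhint : Integrable (fun x => |h x| ^ r) μ) :
    ∫ x, |g x| ^ (r - 1) * |h x| ∂μ
      ≤ (∫ x, |g x| ^ r ∂μ) ^ ((r - 1) / r) * (∫ x, |h x| ^ r ∂μ) ^ (1 / r) := by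
  have hr1 : r - 1 ≠ 0 := by linarith
  have key := integral_mul_le_Lp_mul_Lq_of_nonneg (holderConjugate_div_sub_one hr)
    (ae_of_all μ fun x => by positivity) (ae_of_all μ fun x => abs_nonneg (h x))
    (memLp_abs_rpow_sub_one hg hr hgint)
    (memLp_ofReal_of_integrable_abs_rpow hh (by linarith) hhint).abs
  convert key using 3
  · refine integral_congr_ae (ae_of_all μ fun x => ?_)
    simp only [← Real.rpow_mul (abs_nonneg _), mul_div_cancel₀ _ hr1]
  · rw [one_div_div]

end Holder

section UniformBounds

variable {α ι : Type*} [MeasurableSpace α] {μ : Measure α} {r C : ℝ}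

lemma integral_abs_rpow_sub_one_mul_abs_le_of_le {g h : α → ℝ} (hg : AEStronglyMeasurable g μ)
    (hh : AEStronglyMeasurable h μ) (hr : 1 < r) (hgint : Integrable (fun x => |g x| ^ r) μ)
    (hhint : Integrable (fun x => |h x| ^ r) μ) (hgC : ∫ x, |g x| ^ r ∂μ ≤ C)
    (hhC : ∫ x, |h x| ^ r ∂μ ≤ C) :
    ∫ x, |g x| ^ (r - 1) * |h x| ∂μ ≤ C := by
  have hg0 : 0 ≤ ∫ x, |g x| ^ r ∂μ := integral_nonneg fun x => by positivity
  have hC : 0 ≤ C := hg0.trans hgC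
  calc ∫ x, |g x| ^ (r - 1) * |h x| ∂μ
      ≤ (∫ x, |g x| ^ r ∂μ) ^ ((r - 1) / r) * (∫ x, |h x| ^ r ∂μ) ^ (1 / r) :=
        integral_abs_rpow_sub_one_mul_abs_le hg hh hr hgint hhint
    _ ≤ C ^ ((r - 1) / r) * C ^ (1 / r) := by gcongr
    _ = C := by
        have hsum : (r - 1) / r + 1 / r = 1 := by field_simp; ring
        rw [← Real.rpow_add' hC (by rw [hsum]; exact one_ne_zero), hsum, Real.rpow_one]

lemma tendsto_integral_abs_rpow_sub_one_mul_abs {l : Filter ι} {g h : ι → α → ℝ}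
    (hg : ∀ i, AEStronglyMeasurable (g i) μ) (hh : ∀ i, AEStronglyMeasurable (h i) μ)
    (hr : 1 < r) (hgint : ∀ i, Integrable (fun x => |g i x| ^ r) μ)
    (hhint : ∀ i, Integrable (fun x => |h i x| ^ r) μ)
    (hgC : ∀ i, ∫ x, |g i x| ^ r ∂μ ≤ C)
    (hh0 : Tendsto (fun i => ∫ x, |h i x| ^ r ∂μ) l (𝓝 0)) :
    Tendsto (fun i => ∫ x, |g i x| ^ (r - 1) * |h i x| ∂μ) l (𝓝 0) := by
  have hr0 : 0 < r := by linarith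
  have hbound :
      Tendsto (fun i => C ^ ((r - 1) / r) * (∫ x, |h i x| ^ r ∂μ) ^ (1 / r)) l (𝓝 0) := by
    have := (hh0.rpow_const (p := 1 / r) (Or.inr (by positivity))).const_mul (C ^ ((r - 1) / r))
    rwa [Real.zero_rpow (one_div_pos.2 hr0).ne', mul_zero] at this
  refine squeeze_zero (fun i => integral_nonneg fun x => by positivity) (fun i => ?_) hbound
  refine (integral_abs_rpow_sub_one_mul_abs_le (hg i) (hh i) hr (hgint i) (hhint i)).trans ?_
  gcongr
  exact hgC i

end UniformBounds

section GrowthBound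

variable {f : ℝ → ℝ} {A B ε : ℝ}

lemma eq_zero_of_tendsto_div_abs_rpow (hf : ContinuousAt f 0) (hA : 0 < A)
    (hf0 : Tendsto (fun t => f t / |t| ^ A) (𝓝[≠] 0) (𝓝 0)) : f 0 = 0 := by
  have hpow : Tendsto (fun t : ℝ => |t| ^ A) (𝓝[≠] 0) (𝓝 0) := by
    refine tendsto_nhdsWithin_of_tendsto_nhds ?_
    simpa [Real.zero_rpow hA.ne'] using
      ((continuous_abs.rpow_const fun _ => Or.inr hA.le).tendsto (0 : ℝ))
  have hprod := hf0.mul hpow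
  rw [zero_mul] at hprod
  refine tendsto_nhds_unique (hf.tendsto.mono_left nhdsWithin_le_nhds) (hprod.congr' ?_)
  filter_upwards [self_mem_nhdsWithin] with t (ht : t ≠ 0)
  exact div_mul_cancel₀ _ (Real.rpow_pos_of_pos (abs_pos.2 ht) A).ne'

lemma eventually_abs_le_mul_abs_rpow {l : Filter ℝ} (hl : ∀ᶠ t in l, t ≠ 0)
    (hf : Tendsto (fun t => f t / |t| ^ A) l (𝓝 0)) (hε : 0 < ε) :
    ∀ᶠ t in l, |f t| ≤ ε * |t| ^ A := by
  filter_upwards [hl, (tendsto_zero_iff_abs_tendsto_zero _).1 hf |>.eventually (gt_mem_nhds hε)]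
    with t ht hlt
  have hpos : 0 < |t| ^ A := Real.rpow_pos_of_pos (abs_pos.2 ht) A
  rw [Function.comp_apply, abs_div, abs_of_pos hpos, div_lt_iff₀ hpos] at hlt
  exact hlt.le

lemma exists_abs_le_mul_abs_rpow_of_le_abs (hf : Continuous f) (hA : 0 ≤ A) {δ : ℝ}
    (hδ : 0 < δ) (M : ℝ) :
    ∃ K, ∀ t, δ ≤ |t| → |t| ≤ M → |f t| ≤ K * |t| ^ A := by
  obtain ⟨L, hL⟩ := (isCompact_Icc (a := -M) (b := M)).exists_bound_of_continuousOn
    hf.continuousOn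
  have hδA : 0 < δ ^ A := Real.rpow_pos_of_pos hδ A
  refine ⟨L / δ ^ A, fun t hδt htM => ?_⟩
  have hft : |f t| ≤ L := hL t (abs_le.1 htM)
  have hL0 : 0 ≤ L := (abs_nonneg _).trans hft
  calc |f t| ≤ L := hft
    _ = L / δ ^ A * δ ^ A := (div_mul_cancel₀ _ hδA.ne').symm
    _ ≤ L / δ ^ A * |t| ^ A := by gcongr

lemma exists_abs_le_mul_abs_rpow_add_mul_abs_rpow (hf : Continuous f) (hA : 0 < A)
    (hf0 : Tendsto (fun t => f t / |t| ^ A) (𝓝[≠] 0) (𝓝 0))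
    (hfinf : Tendsto (fun t => f t / |t| ^ B) (cocompact ℝ) (𝓝 0)) (hε : 0 < ε) :
    ∃ K, ∀ t, |f t| ≤ ε * |t| ^ B + K * |t| ^ A := by
  have hzero := eq_zero_of_tendsto_div_abs_rpow hf.continuousAt hA hf0
  obtain ⟨δ, hδ, hsmall⟩ : ∃ δ > 0, ∀ t, |t| < δ → |f t| ≤ ε * |t| ^ A := by
    have := eventually_abs_le_mul_abs_rpow self_mem_nhdsWithin hf0 hε
    obtain ⟨δ, hδ, h⟩ := Metric.eventually_nhds_iff.1 (eventually_nhdsWithin_iff.1 this)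
    refine ⟨δ, hδ, fun t ht => ?_⟩
    rcases eq_or_ne t 0 with rfl | ht0
    · simp [hzero, Real.zero_rpow hA.ne']
    · exact h (by simpa using ht) ht0
  obtain ⟨M, -, hlarge⟩ : ∃ M, True ∧ ∀ t : ℝ, M ≤ |t| → |f t| ≤ ε * |t| ^ B := by
    refine hasBasis_cobounded_norm.eventually_iff.1 ?_
    rw [Metric.cobounded_eq_cocompact]
    exact eventually_abs_le_mul_abs_rpow isCompact_singleton.compl_mem_cocompact hfinf hε
  obtain ⟨K, hmid⟩ := exists_abs_le_mul_abs_rpow_of_le_abs hf hA.le hδ M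
  refine ⟨max ε K, fun t => ?_⟩
  have htA : 0 ≤ |t| ^ A := by positivity
  have htB : 0 ≤ |t| ^ B := by positivity
  rcases lt_or_ge |t| δ with ht | ht
  · nlinarith [hsmall t ht, le_max_left ε K]
  rcases lt_or_ge |t| M with ht' | ht'
  · nlinarith [hmid t ht ht'.le, le_max_right ε K]
  · nlinarith [hlarge t ht', le_max_left ε K]

end GrowthBound

section Convergence

variable {α ι : Type*} [MeasurableSpace α] {μ : Measure α}

lemma integral_abs_comp_mul_le {f : ℝ → ℝ} {A B ε K : ℝ}
    (hf : ∀ t, |f t| ≤ ε * |t| ^ B + K * |t| ^ A) {g h : α → ℝ}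
    (hB : Integrable (fun x => |g x| ^ B * |h x|) μ)
    (hA : Integrable (fun x => |g x| ^ A * |h x|) μ) :
    ∫ x, |f (g x) * h x| ∂μ
      ≤ ε * ∫ x, |g x| ^ B * |h x| ∂μ + K * ∫ x, |g x| ^ A * |h x| ∂μ := by
  rw [← integral_const_mul, ← integral_const_mul,
    ← integral_add (hB.const_mul ε) (hA.const_mul K)]
  refine integral_mono_of_nonneg (ae_of_all μ fun x => abs_nonneg _)
    ((hB.const_mul ε).add (hA.const_mul K)) (ae_of_all μ fun x => ?_)
  beta_reduce
  rw [abs_mul]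
  exact (mul_le_mul_of_nonneg_right (hf (g x)) (abs_nonneg _)).trans_eq (by ring)

theorem tendsto_integral_comp_mul_of_forall_abs_le {l : Filter ι} {f : ℝ → ℝ} {a b C : ℝ}
    (ha : 1 < a) (hb : 1 < b)
    (hf : ∀ ε > 0, ∃ K, ∀ t, |f t| ≤ ε * |t| ^ (b - 1) + K * |t| ^ (a - 1))
    {u v : ι → α → ℝ} (hu : ∀ i, AEStronglyMeasurable (u i) μ)
    (hv : ∀ i, AEStronglyMeasurable (v i) μ)
    (hub : ∀ i, Integrable (fun x => |u i x| ^ b) μ)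
    (hua : ∀ i, Integrable (fun x => |u i x| ^ a) μ)
    (hvb : ∀ i, Integrable (fun x => |v i x| ^ b) μ)
    (hva : ∀ i, Integrable (fun x => |v i x| ^ a) μ)
    (hCub : ∀ i, ∫ x, |u i x| ^ b ∂μ ≤ C) (hCua : ∀ i, ∫ x, |u i x| ^ a ∂μ ≤ C)
    (hCvb : ∀ i, ∫ x, |v i x| ^ b ∂μ ≤ C)
    (hva0 : Tendsto (fun i => ∫ x, |v i x| ^ a ∂μ) l (𝓝 0)) :
    Tendsto (fun i => ∫ x, f (u i x) * v i x ∂μ) l (𝓝 0) := by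
  rw [NormedAddGroup.tendsto_nhds_zero]
  intro ε hε
  obtain ⟨η, hη, hηC⟩ : ∃ η > 0, η * C < ε / 2 := by
    refine ⟨ε / (2 * (|C| + 1)), by positivity, ?_⟩
    rw [div_mul_eq_mul_div, div_lt_iff₀ (by positivity)]
    nlinarith [le_abs_self C]
  obtain ⟨K, hK⟩ := hf η hη
  have hsub := (tendsto_integral_abs_rpow_sub_one_mul_abs hu hv ha hua hva hCua hva0).const_mul K
  rw [mul_zero] at hsub
  filter_upwards [hsub.eventually (gt_mem_nhds (half_pos hε))] with i hi
  calc ‖∫ x, f (u i x) * v i x ∂μ‖ ≤ ∫ x, |f (u i x) * v i x| ∂μ :=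
        norm_integral_le_integral_norm _
    _ ≤ η * ∫ x, |u i x| ^ (b - 1) * |v i x| ∂μ
          + K * ∫ x, |u i x| ^ (a - 1) * |v i x| ∂μ :=
        integral_abs_comp_mul_le hK
          (integrable_abs_rpow_sub_one_mul_abs (hu i) (hv i) hb (hub i) (hvb i))
          (integrable_abs_rpow_sub_one_mul_abs (hu i) (hv i) ha (hua i) (hva i))
    _ ≤ η * C + K * ∫ x, |u i x| ^ (a - 1) * |v i x| ∂μ := by
        gcongr
        exact integral_abs_rpow_sub_one_mul_abs_le_of_le (hu i) (hv i) hb (hub i) (hvb i)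
          (hCub i) (hCvb i)
    _ < ε := by linarith

end Convergence

theorem stmt_14_general (N : ℕ) (p : ℝ) (hp2 : 2 ≤ p) (hpN : p < (N : ℝ))
    (f : ℝ → ℝ) (hf0 : Continuous f)
    (hf1 : Tendsto (fun t : ℝ => f t / |t| ^ (p + 2 * p / (N : ℝ) - 1)) (nhdsWithin 0 {0}ᶜ) (nhds 0))
    (hf2 : Tendsto (fun t : ℝ => f t / |t| ^ ((N : ℝ) * p / ((N : ℝ) - p) - 1)) (cocompact ℝ) (nhds 0))
    (u v : ℕ → (Fin N → ℝ) → ℝ)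
    (humeas : ∀ n : ℕ, Measurable (u n)) (hvmeas : ∀ n : ℕ, Measurable (v n))
    (hintu1 : ∀ n : ℕ, Integrable (fun x : Fin N → ℝ => |u n x| ^ ((N : ℝ) * p / ((N : ℝ) - p))))
    (hintu2 : ∀ n : ℕ, Integrable (fun x : Fin N → ℝ => |u n x| ^ (p + 2 * p / (N : ℝ))))
    (hintv1 : ∀ n : ℕ, Integrable (fun x : Fin N → ℝ => |v n x| ^ ((N : ℝ) * p / ((N : ℝ) - p))))
    (hintv2 : ∀ n : ℕ, Integrable (fun x : Fin N → ℝ => |v n x| ^ (p + 2 * p / (N : ℝ))))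
    (C : ℝ)
    (hCu1 : ∀ n : ℕ, (∫ x : Fin N → ℝ, |u n x| ^ ((N : ℝ) * p / ((N : ℝ) - p))) ≤ C)
    (hCu2 : ∀ n : ℕ, (∫ x : Fin N → ℝ, |u n x| ^ (p + 2 * p / (N : ℝ))) ≤ C)
    (hCv1 : ∀ n : ℕ, (∫ x : Fin N → ℝ, |v n x| ^ ((N : ℝ) * p / ((N : ℝ) - p))) ≤ C)
    (hto0 : Tendsto (fun n : ℕ => ∫ x : Fin N → ℝ, |v n x| ^ (p + 2 * p / (N : ℝ))) atTop (nhds 0)) :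
    Tendsto (fun n : ℕ => ∫ x : Fin N → ℝ, f (u n x) * v n x) atTop (nhds 0) := by
  have hNp : 0 < (N : ℝ) - p := sub_pos.2 hpN
  have ha : 1 < p + 2 * p / N := by
    have : 0 ≤ 2 * p / N := by positivity
    linarith
  have hb : 1 < N * p / (N - p) := by
    rw [lt_div_iff₀ hNp]
    nlinarith
  exact tendsto_integral_comp_mul_of_forall_abs_le ha hb
    (fun ε hε => exists_abs_le_mul_abs_rpow_add_mul_abs_rpow hf0 (by linarith) hf1 hf2 hε)
    (fun n => (humeas n).aestronglyMeasurable) (fun n => (hvmeas n).aestronglyMeasurable)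
    hintu1 hintu2 hintv1 hintv2 hCu1 hCu2 hCv1 hto0

theorem stmt_14 (N : ℕ) (hN : 3 ≤ N) (p : ℝ) (hp2 : 2 ≤ p) (hpN : p < (N : ℝ))
    (f : ℝ → ℝ) (hf0 : Continuous f)
    (hf1 : Tendsto (fun t : ℝ => f t / |t| ^ (p + 2 * p / (N : ℝ) - 1)) (nhdsWithin 0 {0}ᶜ) (nhds 0))
    (hf2 : Tendsto (fun t : ℝ => f t / |t| ^ ((N : ℝ) * p / ((N : ℝ) - p) - 1)) (cocompact ℝ) (nhds 0))
    (u v : ℕ → (Fin N → ℝ) → ℝ)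
    (humeas : ∀ n : ℕ, Measurable (u n)) (hvmeas : ∀ n : ℕ, Measurable (v n))
    (hintu1 : ∀ n : ℕ, Integrable (fun x : Fin N → ℝ => |u n x| ^ ((N : ℝ) * p / ((N : ℝ) - p))))
    (hintu2 : ∀ n : ℕ, Integrable (fun x : Fin N → ℝ => |u n x| ^ (p + 2 * p / (N : ℝ))))
    (hintv1 : ∀ n : ℕ, Integrable (fun x : Fin N → ℝ => |v n x| ^ ((N : ℝ) * p / ((N : ℝ) - p))))
    (hintv2 : ∀ n : ℕ, Integrable (fun x : Fin N → ℝ => |v n x| ^ (p + 2 * p / (N : ℝ))))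
    (C : ℝ)
    (hCu1 : ∀ n : ℕ, (∫ x : Fin N → ℝ, |u n x| ^ ((N : ℝ) * p / ((N : ℝ) - p))) ≤ C)
    (hCu2 : ∀ n : ℕ, (∫ x : Fin N → ℝ, |u n x| ^ (p + 2 * p / (N : ℝ))) ≤ C)
    (hCv1 : ∀ n : ℕ, (∫ x : Fin N → ℝ, |v n x| ^ ((N : ℝ) * p / ((N : ℝ) - p))) ≤ C)
    (hto0 : Tendsto (fun n : ℕ => ∫ x : Fin N → ℝ, |v n x| ^ (p + 2 * p / (N : ℝ))) atTop (nhds 0)) :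
    Tendsto (fun n : ℕ => ∫ x : Fin N → ℝ, f (u n x) * v n x) atTop (nhds 0) :=
  stmt_14_general N p hp2 hpN f hf0 hf1 hf2 u v humeas hvmeas hintu1 hintu2 hintv1 hintv2 C hCu1
    hCu2 hCv1 hto0
end

section
/- Let f : ℝ → ℝ be continuous with |f(t)| ≤ C(|t| + |t|^{p^*−1}) for all t, for some C > 0, and let F(t) := ∫_0^t f(s) ds. Let u and (u_n) be measurable functions from ℝ^N to ℝ such that u_n → u almost everywhere on ℝ^N, sup_n ∫_{ℝ^N} (u_n² + |u_n|^{p^*}) dx < +∞, sup_n ∫_{ℝ^N} ((u_n−u)² + |u_n−u|^{p^*}) dx < +∞, and ∫_{ℝ^N} (u² + |u|^{p^*}) dx < +∞. Then ∫_{ℝ^N} |F(u_n) − F(u_n−u) − F(u)| dx → 0 as n → ∞. (Lemma 2.6, a Brezis–Lieb-type splitting, stated with the L²∩L^{p^*}-bounds that the Sobolev bounds yield.) -/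
/-
With `Φ t = t ^ 2 + |t| ^ p*`, the growth of `f` gives `|F (v + w) - F v| ≤ C |w| (R + R ^ (p* - 1))`
for `R = |v| + |w|`, and an `ε`-Young splitting of `|w| R ^ r` turns this into
`|F (u_n) - F (u_n - u) - F u| ≤ ε Φ (u_n - u) + K_ε Φ u`. The positive part of the left side minus
`ε Φ (u_n - u)` is dominated by `K_ε Φ u` and tends to `0` a.e., so its integral tends to `0` by
dominated convergence; as `∫ Φ (u_n - u) ≤ M`, the `limsup` of the integrals is at most `ε M`.
-/

open Filter Set MeasureTheory Topology

theorem exists_mul_add_rpow_le {r ε : ℝ} (hr : 0 ≤ r) (hε : 0 < ε) :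
    ∃ K, 0 ≤ K ∧ ∀ a b : ℝ, 0 ≤ a → 0 ≤ b →
      b * (a + b) ^ r ≤ ε * a ^ (r + 1) + K * b ^ (r + 1) := by
  set δ := min 1 (ε / 2 ^ r)
  have h2r : (0 : ℝ) < 2 ^ r := by positivity
  have hδ : 0 < δ := lt_min one_pos (by positivity)
  have hδε : δ * 2 ^ r ≤ ε := (le_div_iff₀ h2r).1 (min_le_right _ _)
  refine ⟨(δ⁻¹ + 1) ^ r, by positivity, fun a b ha hb => ?_⟩
  have hpow : ∀ c : ℝ, 0 ≤ c → c ^ (r + 1) = c ^ r * c := fun c hc => by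
    rw [Real.rpow_add' hc (by linarith), Real.rpow_one]
  rcases le_or_gt b (δ * a) with hba | hab
  · have hsum : (a + b) ^ r ≤ 2 ^ r * a ^ r := by
      rw [← Real.mul_rpow zero_le_two ha]
      exact Real.rpow_le_rpow (by positivity) (by nlinarith [min_le_left 1 (ε / 2 ^ r)]) hr
    have : b * (a + b) ^ r ≤ ε * a ^ (r + 1) := by
      rw [hpow a ha]
      calc b * (a + b) ^ r ≤ (δ * a) * (2 ^ r * a ^ r) :=
            mul_le_mul hba hsum (by positivity) (by positivity)
        _ = (δ * 2 ^ r) * (a ^ r * a) := by ring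
        _ ≤ ε * (a ^ r * a) := by gcongr
    exact le_add_of_le_of_nonneg this (mul_nonneg (by positivity) (Real.rpow_nonneg hb _))
  · have hsum : (a + b) ^ r ≤ (δ⁻¹ + 1) ^ r * b ^ r := by
      rw [← Real.mul_rpow (by positivity) hb]
      refine Real.rpow_le_rpow (by positivity) ?_ hr
      have : a ≤ δ⁻¹ * b := by rw [inv_mul_eq_div, le_div_iff₀ hδ]; linarith
      linarith
    have : b * (a + b) ^ r ≤ (δ⁻¹ + 1) ^ r * b ^ (r + 1) := by
      rw [hpow b hb]
      calc b * (a + b) ^ r ≤ b * ((δ⁻¹ + 1) ^ r * b ^ r) := by gcongr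
        _ = (δ⁻¹ + 1) ^ r * (b ^ r * b) := by ring
    exact le_add_of_nonneg_of_le (mul_nonneg hε.le (Real.rpow_nonneg ha _)) this

theorem exists_abs_integral_le {f : ℝ → ℝ} {C q : ℝ} (hC : 0 < C) (hq : 1 < q)
    (hgrow : ∀ t, |f t| ≤ C * (|t| + |t| ^ (q - 1))) {ε : ℝ} (hε : 0 < ε) :
    ∃ K, ∀ v w : ℝ,
      |∫ s in v..v + w, f s| ≤ ε * (v ^ 2 + |v| ^ q) + K * (w ^ 2 + |w| ^ q) := by
  obtain ⟨K₁, hK₁, h₁⟩ := exists_mul_add_rpow_le zero_le_one (div_pos hε hC)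
  obtain ⟨K₂, hK₂, h₂⟩ := exists_mul_add_rpow_le (by linarith : 0 ≤ q - 1) (div_pos hε hC)
  refine ⟨C * (K₁ + K₂), fun v w => ?_⟩
  set R := |v| + |w|
  have hf : ∀ s ∈ uIoc v (v + w), ‖f s‖ ≤ C * (R + R ^ (q - 1)) := fun s hs => by
    have hsR : |s| ≤ R := by
      have := abs_sub_left_of_mem_uIcc (uIoc_subset_uIcc hs)
      rw [add_sub_cancel_left] at this
      linarith [abs_sub_abs_le_abs_sub s v]
    calc ‖f s‖ ≤ C * (|s| + |s| ^ (q - 1)) := hgrow s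
      _ ≤ C * (R + R ^ (q - 1)) := by gcongr
  have hlin := h₁ |v| |w| (abs_nonneg v) (abs_nonneg w)
  have hpow := h₂ |v| |w| (abs_nonneg v) (abs_nonneg w)
  norm_num only [Real.rpow_one, sub_add_cancel, Real.rpow_two, sq_abs] at hlin hpow
  have hw := Real.rpow_nonneg (abs_nonneg w) q
  calc |∫ s in v..v + w, f s| ≤ C * (R + R ^ (q - 1)) * |v + w - v| :=
        intervalIntegral.norm_integral_le_of_norm_le_const hf
    _ = C * (|w| * R + |w| * R ^ (q - 1)) := by rw [add_sub_cancel_left]; ring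
    _ ≤ C * ((ε / C * v ^ 2 + K₁ * w ^ 2) + (ε / C * |v| ^ q + K₂ * |w| ^ q)) := by
        gcongr
    _ = ε * (v ^ 2 + |v| ^ q) + C * (K₁ * w ^ 2 + K₂ * |w| ^ q) := by
        field_simp; ring
    _ ≤ ε * (v ^ 2 + |v| ^ q) + C * (K₁ + K₂) * (w ^ 2 + |w| ^ q) := by
        rw [mul_assoc C]
        gcongr
        nlinarith [mul_nonneg hK₁ hw, mul_nonneg hK₂ (sq_nonneg w)]

theorem exists_abs_primitive_sub_sub_le {f F : ℝ → ℝ} {C q : ℝ} (hf : Continuous f)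
    (hC : 0 < C) (hq : 1 < q) (hgrow : ∀ t, |f t| ≤ C * (|t| + |t| ^ (q - 1)))
    (hF : ∀ t, F t = ∫ s in (0 : ℝ)..t, f s) {ε : ℝ} (hε : 0 < ε) :
    ∃ K, ∀ a b : ℝ,
      |F a - F (a - b) - F b| ≤ ε * ((a - b) ^ 2 + |a - b| ^ q) + K * (b ^ 2 + |b| ^ q) := by
  obtain ⟨K, hK⟩ := exists_abs_integral_le hC hq hgrow hε
  refine ⟨2 * K, fun a b => ?_⟩
  have hdiff : ∀ v w, F (v + w) - F v = ∫ s in v..v + w, f s := fun v w => by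
    rw [hF, hF, intervalIntegral.integral_interval_sub_left (hf.intervalIntegrable _ _)
      (hf.intervalIntegrable _ _)]
  have hfirst := hK (a - b) b
  have hsecond := hK 0 b
  rw [← hdiff, sub_add_cancel] at hfirst
  rw [← hdiff, zero_add, hF 0, intervalIntegral.integral_same, sub_zero] at hsecond
  norm_num [Real.zero_rpow (by linarith : q ≠ 0)] at hsecond
  calc |F a - F (a - b) - F b| ≤ |F a - F (a - b)| + |F b| := abs_sub _ _
    _ ≤ _ := by linarith

theorem norm_max_sub_zero_le {a b c : ℝ} (h : a ≤ b + c) : ‖max (a - b) 0‖ ≤ ‖c‖ := by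
  rw [Real.norm_of_nonneg (le_max_right _ _), Real.norm_eq_abs]
  exact max_le (by linarith [le_abs_self c]) (abs_nonneg _)

section

variable {α : Type*} [MeasurableSpace α] {μ : Measure α}

theorem tendsto_integral_max_sub_zero {g k : ℕ → α → ℝ} {φ : α → ℝ}
    (hg : ∀ n, AEStronglyMeasurable (g n) μ) (hk : ∀ n, AEStronglyMeasurable (k n) μ)
    (hk0 : ∀ n x, 0 ≤ k n x) (hlim : ∀ᵐ x ∂μ, Tendsto (fun n => g n x) atTop (𝓝 0))
    (hφ : Integrable φ μ) (hdom : ∀ n x, g n x ≤ k n x + φ x) :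
    Tendsto (fun n => ∫ x, max (g n x - k n x) 0 ∂μ) atTop (𝓝 0) := by
  have hψlim : ∀ᵐ x ∂μ, Tendsto (fun n => max (g n x - k n x) 0) atTop (𝓝 0) := by
    filter_upwards [hlim] with x hx
    refine tendsto_of_tendsto_of_tendsto_of_le_of_le tendsto_const_nhds
      (by simpa using hx.max (tendsto_const_nhds (x := (0 : ℝ))))
      (fun n => le_max_right _ _) (fun n => max_le_max (by linarith [hk0 n x]) le_rfl)
  simpa using tendsto_integral_of_dominated_convergence (f := fun _ => 0) _
    (fun n => ((hg n).sub (hk n)).sup aestronglyMeasurable_const) hφ.norm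
    (fun n => .of_forall fun x => norm_max_sub_zero_le (hdom n x)) hψlim

theorem tendsto_integral_of_le_mul_add {g h : ℕ → α → ℝ} {M : ℝ}
    (hg : ∀ n, AEStronglyMeasurable (g n) μ) (hg0 : ∀ n x, 0 ≤ g n x)
    (hlim : ∀ᵐ x ∂μ, Tendsto (fun n => g n x) atTop (𝓝 0))
    (hh0 : ∀ n x, 0 ≤ h n x) (hh : ∀ n, Integrable (h n) μ) (hM : ∀ n, ∫ x, h n x ∂μ ≤ M)
    (hdom : ∀ ε > 0, ∃ φ : α → ℝ, Integrable φ μ ∧ ∀ n x, g n x ≤ ε * h n x + φ x) :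
    Tendsto (fun n => ∫ x, g n x ∂μ) atTop (𝓝 0) := by
  refine tendsto_order.2 ⟨fun a ha => .of_forall fun n => ha.trans_le
    (integral_nonneg (hg0 n)), fun δ hδ => ?_⟩
  set ε := δ / (2 * (|M| + 1))
  have hε : 0 < ε := by positivity
  have hεM : ε * M < δ := by
    have : ε * (2 * (|M| + 1)) = δ := div_mul_cancel₀ _ (by positivity)
    nlinarith [le_abs_self M]
  obtain ⟨φ, hφ, hgφ⟩ := hdom ε hε
  have hεh : ∀ n, Integrable (fun x => ε * h n x) μ := fun n => (hh n).const_mul ε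
  have hψ : ∀ n, Integrable (fun x => max (g n x - ε * h n x) 0) μ := fun n =>
    hφ.norm.mono' (((hg n).sub (hεh n).1).sup aestronglyMeasurable_const)
      (.of_forall fun x => norm_max_sub_zero_le (hgφ n x))
  filter_upwards [(tendsto_order.1 (tendsto_integral_max_sub_zero hg (fun n => (hεh n).1)
    (fun n x => mul_nonneg hε.le (hh0 n x)) hlim hφ hgφ)).2 (δ - ε * M) (by linarith)] with n hn
  calc ∫ x, g n x ∂μ ≤ ∫ x, (max (g n x - ε * h n x) 0 + ε * h n x) ∂μ :=
        integral_mono_of_nonneg (.of_forall (hg0 n)) ((hψ n).add (hεh n))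
          (.of_forall fun x => by linarith [le_max_left (g n x - ε * h n x) 0])
    _ = ∫ x, max (g n x - ε * h n x) 0 ∂μ + ε * ∫ x, h n x ∂μ := by
        rw [integral_add (hψ n) (hεh n), integral_const_mul]
    _ < δ := by nlinarith [hM n]

end

theorem stmt_15_general (N : ℕ) (p : ℝ) (hp2 : 2 ≤ p) (hpN : p < (N : ℝ))
    (C : ℝ) (hCpos : 0 < C)
    (f F : ℝ → ℝ) (hf0 : Continuous f)
    (hgrow : ∀ t : ℝ, |f t| ≤ C * (|t| + |t| ^ (((N : ℝ) * p / ((N : ℝ) - p)) - 1)))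
    (hF : ∀ t : ℝ, F t = ∫ s in (0:ℝ)..t, f s)
    (u : (Fin N → ℝ) → ℝ) (hu : Measurable u)
    (un : ℕ → (Fin N → ℝ) → ℝ) (hun : ∀ n : ℕ, Measurable (un n))
    (hae : ∀ᵐ x : Fin N → ℝ, Tendsto (fun n : ℕ => un n x) atTop (nhds (u x)))
    (hint2 : ∀ n : ℕ, Integrable (fun x : Fin N → ℝ => (un n x - u x) ^ 2 + |un n x - u x| ^ ((N : ℝ) * p / ((N : ℝ) - p))))
    (hint3 : Integrable (fun x : Fin N → ℝ => (u x) ^ 2 + |u x| ^ ((N : ℝ) * p / ((N : ℝ) - p))))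
    (M : ℝ)
    (hb2 : ∀ n : ℕ, (∫ x : Fin N → ℝ, ((un n x - u x) ^ 2 + |un n x - u x| ^ ((N : ℝ) * p / ((N : ℝ) - p)))) ≤ M) :
    Tendsto (fun n : ℕ => ∫ x : Fin N → ℝ, |F (un n x) - F (un n x - u x) - F (u x)|)
      atTop (nhds 0) := by
  set q := (N : ℝ) * p / ((N : ℝ) - p)
  have hq : 1 < q := by
    rw [one_lt_div (by linarith)]
    nlinarith
  have hFc : Continuous F := by
    rw [funext hF]
    exact intervalIntegral.continuous_primitive (fun a b => hf0.intervalIntegrable a b) 0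
  refine tendsto_integral_of_le_mul_add
    (fun n => (((hFc.measurable.comp (hun n)).sub (hFc.measurable.comp ((hun n).sub hu))).sub
      (hFc.measurable.comp hu)).abs.aestronglyMeasurable)
    (fun n x => abs_nonneg _) ?_ (fun n x => by positivity) hint2 hb2 fun ε hε => ?_
  · filter_upwards [hae] with x hx
    have hcont := ((hFc.tendsto _).comp hx).sub ((hFc.tendsto _).comp (hx.sub_const (u x)))
    simpa [hF 0] using (hcont.sub_const (F (u x))).abs
  · obtain ⟨K, hK⟩ := exists_abs_primitive_sub_sub_le hf0 hCpos hq hgrow hF hε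
    exact ⟨_, hint3.const_mul K, fun n x => hK _ _⟩

theorem stmt_15 (N : ℕ) (hN : 3 ≤ N) (p : ℝ) (hp2 : 2 ≤ p) (hpN : p < (N : ℝ))
    (C : ℝ) (hCpos : 0 < C)
    (f F : ℝ → ℝ) (hf0 : Continuous f)
    (hgrow : ∀ t : ℝ, |f t| ≤ C * (|t| + |t| ^ (((N : ℝ) * p / ((N : ℝ) - p)) - 1)))
    (hF : ∀ t : ℝ, F t = ∫ s in (0:ℝ)..t, f s)
    (u : (Fin N → ℝ) → ℝ) (hu : Measurable u)
    (un : ℕ → (Fin N → ℝ) → ℝ) (hun : ∀ n : ℕ, Measurable (un n))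
    (hae : ∀ᵐ x : Fin N → ℝ, Tendsto (fun n : ℕ => un n x) atTop (nhds (u x)))
    (hint1 : ∀ n : ℕ, Integrable (fun x : Fin N → ℝ => (un n x) ^ 2 + |un n x| ^ ((N : ℝ) * p / ((N : ℝ) - p))))
    (hint2 : ∀ n : ℕ, Integrable (fun x : Fin N → ℝ => (un n x - u x) ^ 2 + |un n x - u x| ^ ((N : ℝ) * p / ((N : ℝ) - p))))
    (hint3 : Integrable (fun x : Fin N → ℝ => (u x) ^ 2 + |u x| ^ ((N : ℝ) * p / ((N : ℝ) - p))))
    (M : ℝ)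
    (hb1 : ∀ n : ℕ, (∫ x : Fin N → ℝ, ((un n x) ^ 2 + |un n x| ^ ((N : ℝ) * p / ((N : ℝ) - p)))) ≤ M)
    (hb2 : ∀ n : ℕ, (∫ x : Fin N → ℝ, ((un n x - u x) ^ 2 + |un n x - u x| ^ ((N : ℝ) * p / ((N : ℝ) - p)))) ≤ M) :
    Tendsto (fun n : ℕ => ∫ x : Fin N → ℝ, |F (un n x) - F (un n x - u x) - F (u x)|)
      atTop (nhds 0) :=
  stmt_15_general N p hp2 hpN C hCpos f F hf0 hgrow hF u hu un hun hae hint2 hint3 M hb2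
end

section
/- Let f : ℝ → ℝ be continuous with |f(t)| ≤ C(|t| + |t|^{p^*−1}) for all t, for some C > 0, and let F(t) := ∫_0^t f(s) ds. Then for every ε > 0 and all real numbers a, b one has |F(a+b) − F(a)| ≤ εC(a² + |2a|^{p^*}) + C[(1 + 1/ε)b² + (1 + ε^{1−p^*})|2b|^{p^*}]. (Key pointwise inequality in the proof of Lemma 2.6.) -/
open Filter Set MeasureTheory

lemma young_like (q ε x y : ℝ) (hq : 1 ≤ q) (hε : 0 < ε) (hx : 0 ≤ x) (hy : 0 ≤ y) :
    x ^ (q - 1) * y ≤ ε * x ^ q + ε ^ (1 - q) * y ^ q := by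
  rcases le_or_gt y (ε * x) with h | h
  · rcases eq_or_lt_of_le hx with hx0 | hx0
    · have hy0 : y = 0 := le_antisymm (by rw [← hx0] at h; simpa using h) hy
      subst hy0
      rw [mul_zero]
      positivity
    · have h1 : x ^ (q-1) * y ≤ x ^ (q-1) * (ε * x) :=
        mul_le_mul_of_nonneg_left h (Real.rpow_nonneg hx _)
      have h2 : x ^ (q-1) * (ε * x) = ε * x ^ q := by
        rw [show q - 1 = q + (-1) by ring, Real.rpow_add hx0, Real.rpow_neg_one]
        field_simp
      calc x^(q-1)*y ≤ ε * x^q := by rw [← h2]; exact h1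
        _ ≤ _ := le_add_of_nonneg_right (by positivity)
  · have hy0 : 0 < y := lt_of_le_of_lt (by positivity) h
    have hxy : x ≤ y / ε := by rw [le_div_iff₀ hε]; nlinarith
    have h1 : x ^ (q-1) ≤ (y/ε) ^ (q-1) :=
      Real.rpow_le_rpow hx hxy (by linarith)
    have h2 : (y/ε)^(q-1) * y = ε^(1-q) * y^q := by
      rw [Real.div_rpow hy hε.le, show (1:ℝ) - q = -(q-1) by ring,
        Real.rpow_neg hε.le]
      have hy1 : y^(q-1) * y = y^q := by
        rw [← Real.rpow_add_one hy0.ne' (q-1)]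
        norm_num
      field_simp
      nlinarith [hy1]
    calc x^(q-1)*y ≤ (y/ε)^(q-1)*y := mul_le_mul_of_nonneg_right h1 hy
      _ = ε^(1-q)*y^q := h2
      _ ≤ _ := le_add_of_nonneg_left (by positivity)

theorem stmt_16 (N : ℕ) (hN : 3 ≤ N) (p : ℝ) (hp2 : 2 ≤ p) (hpN : p < (N : ℝ))
    (C : ℝ) (hCpos : 0 < C)
    (f F : ℝ → ℝ) (hf0 : Continuous f)
    (hgrow : ∀ t : ℝ, |f t| ≤ C * (|t| + |t| ^ (((N : ℝ) * p / ((N : ℝ) - p)) - 1)))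
    (hF : ∀ t : ℝ, F t = ∫ s in (0:ℝ)..t, f s) :
    ∀ ε : ℝ, 0 < ε → ∀ a b : ℝ,
      |F (a + b) - F a| ≤ ε * C * (a ^ 2 + |2 * a| ^ ((N : ℝ) * p / ((N : ℝ) - p))) +
        C * ((1 + 1 / ε) * b ^ 2 + (1 + ε ^ (1 - ((N : ℝ) * p / ((N : ℝ) - p)))) * |2 * b| ^ ((N : ℝ) * p / ((N : ℝ) - p))) := by
  intro ε hε a b
  set q : ℝ := (N:ℝ)*p/((N:ℝ)-p) with hqdef
  have hNp : 0 < (N:ℝ) - p := by linarith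
  have hq2 : 2 < q := by
    have hpq : p < q := by
      rw [hqdef, lt_div_iff₀ hNp]; nlinarith
    linarith
  have hq1 : (0:ℝ) ≤ q - 1 := by linarith
  -- pointwise bound on the interval
  have hM : ∀ x ∈ Set.uIoc a (a+b), ‖f x‖ ≤ C * ((|a|+|b|) + (|a|+|b|)^(q-1)) := by
    intro x hx
    have hx' : |x| ≤ |a| + |b| := by
      rw [Set.mem_uIoc] at hx
      rw [abs_le]
      rcases hx with ⟨h1, h2⟩ | ⟨h1, h2⟩ <;> constructor <;>
        linarith [le_abs_self a, neg_abs_le a, le_abs_self b, neg_abs_le b]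
    rw [Real.norm_eq_abs]
    calc |f x| ≤ C * (|x| + |x|^(q-1)) := hgrow x
      _ ≤ C * ((|a|+|b|) + (|a|+|b|)^(q-1)) := by
          apply mul_le_mul_of_nonneg_left _ hCpos.le
          have := Real.rpow_le_rpow (abs_nonneg x) hx' hq1
          linarith
  have hInt : F (a+b) - F a = ∫ s in a..(a+b), f s := by
    rw [hF, hF]
    exact intervalIntegral.integral_interval_sub_left
      (hf0.intervalIntegrable _ _) (hf0.intervalIntegrable _ _)
  have hbound : |F (a+b) - F a| ≤ C * ((|a|+|b|) + (|a|+|b|)^(q-1)) * |b| := by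
    rw [hInt]
    calc |∫ s in a..(a+b), f s| = ‖∫ s in a..(a+b), f s‖ := (Real.norm_eq_abs _).symm
      _ ≤ C * ((|a|+|b|) + (|a|+|b|)^(q-1)) * |a+b-a| :=
          intervalIntegral.norm_integral_le_of_norm_le_const hM
      _ = C * ((|a|+|b|) + (|a|+|b|)^(q-1)) * |b| := by rw [add_sub_cancel_left]
  -- algebraic inequality
  have hδ : ε * (1/ε) = 1 := by field_simp
  have h1 : |a| * |b| ≤ ε*a^2 + (1/ε)*b^2 := by
    have key : ε * (|a| * |b|) ≤ ε * (ε*a^2 + (1/ε)*b^2) := by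
      have heq : ε * (ε*a^2 + (1/ε)*b^2) = ε^2*a^2 + b^2 := by
        field_simp
      rw [heq]
      nlinarith [sq_nonneg (ε * |a| - |b|), abs_mul_abs_self a, abs_mul_abs_self b,
        mul_nonneg (mul_nonneg hε.le (abs_nonneg a)) (abs_nonneg b)]
    exact le_of_mul_le_mul_left key hε
  have h2 : (|a|+|b|)^(q-1) ≤ |2*a|^(q-1) + |2*b|^(q-1) := by
    have h2a : |2*a| = 2* |a| := by rw [abs_mul, abs_two]
    have h2b : |2*b| = 2* |b| := by rw [abs_mul, abs_two]
    rcases le_total |a| |b| with h | h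
    · calc (|a|+|b|)^(q-1) ≤ |2*b|^(q-1) := by
            apply Real.rpow_le_rpow (by positivity) _ hq1
            rw [h2b]; linarith
        _ ≤ _ := le_add_of_nonneg_left (by positivity)
    · calc (|a|+|b|)^(q-1) ≤ |2*a|^(q-1) := by
            apply Real.rpow_le_rpow (by positivity) _ hq1
            rw [h2a]; linarith
        _ ≤ _ := le_add_of_nonneg_right (by positivity)
  have h3 : |2*a|^(q-1)* |b| ≤ ε* |2*a|^q + ε^(1-q)* |2*b|^q := by
    have hy := young_like q ε |2*a| |b| (by linarith) hε (abs_nonneg _) (abs_nonneg _)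
    have hble : |b| ≤ |2*b| := by rw [abs_mul, abs_two]; linarith [abs_nonneg b]
    have hbq : |b|^q ≤ |2*b|^q := Real.rpow_le_rpow (abs_nonneg b) hble (by linarith)
    have hεq : (0:ℝ) ≤ ε^(1-q) := by positivity
    have := mul_le_mul_of_nonneg_left hbq hεq
    linarith
  have h4 : |2*b|^(q-1)* |b| ≤ |2*b|^q := by
    rcases eq_or_ne b 0 with rfl | hb
    · simp [Real.zero_rpow (show q ≠ 0 by linarith)]
    · have h2b0 : (0:ℝ) < |2*b| := abs_pos.mpr (by simpa using hb)
      have hble : |b| ≤ |2*b| := by rw [abs_mul, abs_two]; linarith [abs_nonneg b]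
      calc |2*b|^(q-1)* |b| ≤ |2*b|^(q-1)* |2*b| :=
            mul_le_mul_of_nonneg_left hble (by positivity)
        _ = |2*b|^q := by rw [← Real.rpow_add_one h2b0.ne' (q-1)]; norm_num
  have h5 : (|a|+|b|)^(q-1)* |b| ≤ ε* |2*a|^q + ε^(1-q)* |2*b|^q + |2*b|^q := by
    calc (|a|+|b|)^(q-1)* |b| ≤ (|2*a|^(q-1) + |2*b|^(q-1))* |b| :=
          mul_le_mul_of_nonneg_right h2 (abs_nonneg b)
      _ = |2*a|^(q-1)* |b| + |2*b|^(q-1)* |b| := by ring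
      _ ≤ _ := by linarith
  have hbb : |b| * |b| = b^2 := by rw [abs_mul_abs_self]; ring
  have hsum : |a| * |b| + |b| * |b| + (|a|+|b|)^(q-1)* |b|
      ≤ ε*a^2 + (1/ε)*b^2 + b^2 + (ε* |2*a|^q + ε^(1-q)* |2*b|^q + |2*b|^q) := by
    linarith
  calc |F (a+b) - F a| ≤ C * ((|a|+|b|) + (|a|+|b|)^(q-1)) * |b| := hbound
    _ = C*(|a| * |b| + |b| * |b| + (|a|+|b|)^(q-1)* |b|) := by ring
    _ ≤ C*(ε*a^2 + (1/ε)*b^2 + b^2 + (ε* |2*a|^q + ε^(1-q)* |2*b|^q + |2*b|^q)) :=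
        mul_le_mul_of_nonneg_left hsum hCpos.le
    _ = ε*C*(a^2 + |2*a|^q) + C*((1+1/ε)*b^2 + (1+ε^(1-q))* |2*b|^q) := by ring
end
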